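/- arXiv:1410.3335 — 10 statements merged into one kernel-verified Lean document; each statement's English description precedes it below -/
import Mathlib

section
/- Under these assumptions, the integral ∫₀^∞ ‖y(t)‖² dt converges and equals tr X, the trace of the solution of the Lyapunov equation AX + XAᵀ = −y₀y₀ᵀ. -/
open Matrix MeasureTheory
open scoped Kronecker

/-- Matrix exponential over ℝ. -/
noncomputable def mexp {k : ℕ} (M : Matrix (Fin k) (Fin k) ℝ) : Matrix (Fin k) (Fin k) ℝ :=
  NormedSpace.exp M

/-- A real square matrix is stable if every complex eigenvalue has negative real part. -/
def IsStableMat {k : ℕ} (M : Matrix (Fin k) (Fin k) ℝ) : Prop :=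
  ∀ μ ∈ spectrum ℂ (M.map (algebraMap ℝ ℂ)), μ.re < 0

/-- Frobenius norm of a real matrix. -/
noncomputable def frobNorm {m l : Type*} [Fintype m] [Fintype l] (M : Matrix m l ℝ) : ℝ :=
  Real.sqrt (∑ i, ∑ j, (M i j) ^ 2)

/-- Euclidean norm of a real vector. -/
noncomputable def euclNorm {m : Type*} [Fintype m] (v : m → ℝ) : ℝ :=
  Real.sqrt (∑ i, (v i) ^ 2)

/-! Put `F t = tr (exp (tA) X exp (tA)ᵀ)`. By the Lyapunov equation
`F' t = tr (exp (tA) (AX + XAᵀ) exp (tA)ᵀ) = -‖y t‖²`, so `∫₀^∞ ‖y‖² = F 0 - lim F = tr X`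
once `exp (tA) → 0`. That limit comes from stability: `exp A` is a polynomial in `A`, so its
eigenvalues are the `exp μ` with `μ` an eigenvalue of `A`; hence its spectral radius is `< 1`,
Gelfand's formula gives `(exp A)ᵏ → 0`, and `exp (tA) = (exp A)^⌊t⌋ exp ((t - ⌊t⌋) A)`. -/

open NormedSpace Filter Topology Polynomial

theorem tendsto_pow_atTop_nhds_zero_of_spectralRadius_lt_one {A : Type*} [NormedRing A]
    [NormedAlgebra ℂ A] [CompleteSpace A] {a : A} (ha : spectralRadius ℂ a < 1) :
    Tendsto (fun k : ℕ => a ^ k) atTop (𝓝 0) := by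
  obtain ⟨r, hr, hr1⟩ := ENNReal.lt_iff_exists_nnreal_btwn.mp ha
  have hgelfand :=
    (spectrum.pow_nnnorm_pow_one_div_tendsto_nhds_spectralRadius a).eventually_lt_const hr
  have hbound : ∀ᶠ k : ℕ in atTop, ‖a ^ k‖₊ ≤ r ^ k := by
    filter_upwards [hgelfand, eventually_ge_atTop 1] with k hk hk1
    have hk' := (ENNReal.rpow_inv_le_iff (Nat.cast_pos.2 hk1)).mp (one_div (k : ℝ) ▸ hk.le)
    rw [ENNReal.rpow_natCast] at hk'
    exact_mod_cast hk'
  refine squeeze_zero_norm' ?_ (tendsto_pow_atTop_nhds_zero_of_lt_one r.2 (by exact_mod_cast hr1))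
  filter_upwards [hbound] with k hk
  exact_mod_cast hk

theorem tendsto_exp_smul_atTop_nhds_zero_of_tendsto_pow {𝔸 : Type*} [NormedRing 𝔸]
    [NormedAlgebra ℚ 𝔸] [NormedAlgebra ℝ 𝔸] [CompleteSpace 𝔸] {a : 𝔸}
    (ha : Tendsto (fun k : ℕ => exp a ^ k) atTop (𝓝 0)) :
    Tendsto (fun t : ℝ => exp (t • a)) atTop (𝓝 0) := by
  obtain ⟨C, hC⟩ := isCompact_Icc.exists_bound_of_continuousOn
    ((exp_continuous.comp (continuous_id.smul continuous_const)).continuousOn :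
      ContinuousOn (fun s : ℝ => exp (s • a)) (Set.Icc 0 1))
  have hsplit (t : ℝ) (ht : 0 ≤ t) : exp (t • a) = exp a ^ ⌊t⌋₊ * exp ((t - ⌊t⌋₊) • a) := by
    rw [← NormedSpace.exp_nsmul, ← NormedSpace.exp_add_of_commute, ← Nat.cast_smul_eq_nsmul ℝ,
      ← add_smul, add_sub_cancel]
    exact ((Commute.refl a).smul_left _).smul_right _
  refine (Tendsto.zero_mul_isBoundedUnder_le (g := fun t : ℝ => exp ((t - ⌊t⌋₊) • a))
    (ha.comp tendsto_nat_floor_atTop) ?_).congr' ?_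
  · refine isBoundedUnder_of_eventually_le (a := C) ?_
    filter_upwards [eventually_ge_atTop 0] with t ht
    exact hC _ ⟨sub_nonneg.2 (Nat.floor_le ht), by linarith [Nat.lt_floor_add_one t]⟩
  · filter_upwards [eventually_ge_atTop 0] with t ht
    exact (hsplit t ht).symm

theorem NormedSpace.exp_mem_adjoin_singleton {𝔸 : Type*} [NormedRing 𝔸] [NormedAlgebra ℂ 𝔸]
    [FiniteDimensional ℂ 𝔸] (a : 𝔸) : exp a ∈ Algebra.adjoin ℂ {a} := by
  have := FiniteDimensional.complete ℂ 𝔸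
  have hclosed : IsClosed (Algebra.adjoin ℂ {a} : Set 𝔸) :=
    (Subalgebra.toSubmodule (Algebra.adjoin ℂ {a})).closed_of_finiteDimensional
  refine hclosed.mem_of_tendsto (exp_series_hasSum_exp' (𝕂 := ℂ) a) (.of_forall fun s => ?_)
  exact Subalgebra.sum_mem _ fun k _ =>
    Subalgebra.smul_mem _ (Subalgebra.pow_mem _ (Algebra.self_mem_adjoin_singleton ℂ a) k) _

theorem Matrix.trace_mul_vecMulVec_self_mul_transpose {m n R : Type*} [Fintype m] [Fintype n]
    [CommSemiring R] (M : Matrix m n R) (y : n → R) :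
    (M * vecMulVec y y * Mᵀ).trace = ∑ i, (M *ᵥ y) i ^ 2 := by
  rw [mul_vecMulVec, vecMulVec_mul, vecMul_transpose, trace_vecMulVec]
  simp only [dotProduct, sq]

section LinftyOpNorm

attribute [local instance] Matrix.linftyOpNormedRing Matrix.linftyOpNormedAlgebra

namespace Matrix

variable {ι : Type*} [Fintype ι] [DecidableEq ι]

theorem exp_mulVec_of_mulVec_eq_smul {M : Matrix ι ι ℂ} {μ : ℂ} {v : ι → ℂ}
    (h : M *ᵥ v = μ • v) : exp M *ᵥ v = Complex.exp μ • v := by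
  have hpow (k : ℕ) : M ^ k *ᵥ v = μ ^ k • v := by
    induction k with
    | zero => simp
    | succ k ih => rw [pow_succ', ← mulVec_mulVec, ih, mulVec_smul, h, smul_smul, pow_succ]
  have hM := (exp_series_hasSum_exp' (𝕂 := ℂ) M).map (mulVec.addMonoidHomLeft v)
    (continuous_id.matrix_mulVec continuous_const)
  have hμ := (exp_series_hasSum_exp' (𝕂 := ℂ) μ).smul_const v
  rw [Complex.exp_eq_exp_ℂ]
  refine hM.unique ?_
  simpa [mulVec.addMonoidHomLeft, Function.comp_def, smul_mulVec, hpow, smul_smul] using hμ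

theorem spectrum_exp_subset [Nonempty ι] (M : Matrix ι ι ℂ) :
    spectrum ℂ (exp M) ⊆ Complex.exp '' spectrum ℂ M := by
  obtain ⟨q, hq⟩ : ∃ q : ℂ[X], aeval M q = exp M := by
    rw [← AlgHom.mem_range, ← Algebra.adjoin_singleton_eq_range_aeval]
    exact exp_mem_adjoin_singleton M
  intro ν hν
  rw [← hq, spectrum.map_polynomial_aeval_of_nonempty M q (spectrum.nonempty M)] at hν
  obtain ⟨μ, hμ, rfl⟩ := hν
  obtain ⟨v, hv⟩ := (Module.End.hasEigenvalue_iff_mem_spectrum.2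
    ((spectrum_toLin' M).symm ▸ hμ)).exists_hasEigenvector
  have hMv : M *ᵥ v = μ • v := by simpa using hv.apply_eq_smul
  have hqv : aeval (toLinAlgEquiv' M) q v = q.eval μ • v :=
    Module.End.aeval_apply_of_hasEigenvector hv
  rw [aeval_algHom_apply, toLinAlgEquiv'_apply, hq] at hqv
  exact ⟨μ, hμ, smul_left_injective ℂ hv.2 ((exp_mulVec_of_mulVec_eq_smul hMv).symm.trans hqv)⟩

theorem hasDerivAt_trace_exp_smul_mul_mul_transpose (A X : Matrix ι ι ℝ) (t : ℝ) :
    HasDerivAt (fun s : ℝ => (exp (s • A) * X * (exp (s • A))ᵀ).trace)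
      (exp (t • A) * (A * X + X * Aᵀ) * (exp (t • A))ᵀ).trace t := by
  simp only [← exp_transpose, transpose_smul]
  have hprod : HasDerivAt (fun s : ℝ => exp (s • A) * X * exp (s • Aᵀ))
      (exp (t • A) * (A * X + X * Aᵀ) * exp (t • Aᵀ)) t :=
    (((hasDerivAt_exp_smul_const A t).mul_const X).mul
      (hasDerivAt_exp_smul_const' Aᵀ t)).congr_deriv (by noncomm_ring)
  exact (traceLinearMap ι ℝ ℝ).toContinuousLinearMap.hasFDerivAt.comp_hasDerivAt t hprod

end Matrix

theorem IsStableMat.tendsto_mexp_smul_atTop {k : ℕ} {A : Matrix (Fin k) (Fin k) ℝ}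
    (hA : IsStableMat A) : Tendsto (fun t : ℝ => mexp (t • A)) atTop (𝓝 0) := by
  rcases isEmpty_or_nonempty (Fin k) with hk | hk
  · exact tendsto_const_nhds.congr fun _ => Subsingleton.elim _ _
  set B := A.map (algebraMap ℝ ℂ)
  have hρ : spectralRadius ℂ (exp B) < 1 := by
    refine ENNReal.coe_one ▸ spectrum.spectralRadius_lt_of_forall_lt (exp B) fun z hz => ?_
    obtain ⟨μ, hμ, rfl⟩ := Matrix.spectrum_exp_subset B hz
    rw [← NNReal.coe_lt_coe, coe_nnnorm, Complex.norm_exp, NNReal.coe_one, Real.exp_lt_one_iff]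
    exact hA μ hμ
  have hmap (m : ℕ) : (exp A ^ m).map (algebraMap ℝ ℂ) = exp B ^ m := by
    have hexp : (algebraMap ℝ ℂ).mapMatrix (exp A) = exp B :=
      map_exp _ (continuous_id.matrix_map Complex.continuous_ofReal) A
    rw [← RingHom.mapMatrix_apply, map_pow, hexp]
  have hpow : Tendsto (fun m : ℕ => exp A ^ m) atTop (𝓝 0) := by
    have := ((continuous_id.matrix_map Complex.continuous_re).tendsto 0).comp
      (tendsto_pow_atTop_nhds_zero_of_spectralRadius_lt_one hρ)
    simpa [← hmap, Function.comp_def, Matrix.map_map] using this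
  exact tendsto_exp_smul_atTop_nhds_zero_of_tendsto_pow hpow

end LinftyOpNorm

theorem integral_norm_sq_traj_eq_trace_lyap {n : ℕ}
    (A X : Matrix (Fin n) (Fin n) ℝ) (y₀ : Fin n → ℝ)
    (hA : IsStableMat A)
    (hX : A * X + X * Aᵀ = -vecMulVec y₀ y₀) :
    IntegrableOn (fun t : ℝ => ∑ i, (mexp (t • A) *ᵥ y₀) i ^ 2) (Set.Ioi 0) ∧
      ∫ t in Set.Ioi (0 : ℝ), ∑ i, (mexp (t • A) *ᵥ y₀) i ^ 2 = X.trace := by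
  set F : ℝ → ℝ := fun t => -(mexp (t • A) * X * (mexp (t • A))ᵀ).trace
  have hderiv (t : ℝ) : HasDerivAt F (∑ i, (mexp (t • A) *ᵥ y₀) i ^ 2) t := by
    have := (hasDerivAt_trace_exp_smul_mul_mul_transpose A X t).neg
    rwa [hX, Matrix.mul_neg, Matrix.neg_mul, trace_neg, neg_neg,
      trace_mul_vecMulVec_self_mul_transpose] at this
  have hnonneg (t : ℝ) (_ : t ∈ Set.Ioi 0) : 0 ≤ ∑ i, (mexp (t • A) *ᵥ y₀) i ^ 2 := by
    positivity
  have hlim : Tendsto F atTop (𝓝 0) := by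
    have hcont : Continuous fun E : Matrix (Fin n) (Fin n) ℝ => -(E * X * Eᵀ).trace := by
      fun_prop
    simpa [Function.comp_def] using (hcont.tendsto 0).comp hA.tendsto_mexp_smul_atTop
  refine ⟨integrableOn_Ioi_deriv_of_nonneg' (fun t _ => hderiv t) hnonneg hlim, ?_⟩
  rw [integral_Ioi_of_hasDerivAt_of_nonneg' (fun t _ => hderiv t) hnonneg hlim]
  simp [F, mexp]
end

section
/- Under these assumptions, the functional F(U) = ∫₀^∞ ‖y(t) − ỹ(t)‖² dt converges and equals tr X + tr Z − 2 tr(Uᵀ P). -/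
open Matrix MeasureTheory
open scoped Kronecker

/-!
For stable `A` and `D` and `A P + P Dᵀ = -Q`, the function `t ↦ e^{tA} P (e^{tD})ᵀ` has derivative
`-e^{tA} Q (e^{tD})ᵀ` and decays to `0`, so `∫₀^∞ e^{tA} Q (e^{tD})ᵀ dt = P`. Since `UᵀU = 1`,
`‖y - U w‖² = tr (y yᵀ) + tr (w wᵀ) - 2 tr (Uᵀ y wᵀ)`, and with `y = e^{tA} y₀`, `w = e^{tB} c₀`
each term is of this form, with `P` equal to `X`, `Z` and `P` respectively.

The exponential decay `‖e^{tM}‖ ≤ C e^{-εt}` of a stable matrix comes from `e^{tM} → 0`, applied to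
the still stable `M + ε` for small `ε > 0`. That limit is computed on generalized eigenvectors of
the complexification, where `e^{tM} v` is `e^{tμ}` times a polynomial in `t`.
-/

open Filter Topology
open NormedSpace (exp)

theorem tendsto_pow_mul_exp_mul_atTop_nhds_zero {c : ℝ} (hc : c < 0) (j : ℕ) :
    Tendsto (fun t : ℝ => t ^ j * Real.exp (c * t)) atTop (𝓝 0) := by
  refine (isLittleO_pow_exp_pos_mul_atTop j (neg_pos.2 hc)).tendsto_div_nhds_zero.congr
    fun t => ?_
  rw [div_eq_mul_inv, ← Real.exp_neg, neg_mul, neg_neg]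

theorem exists_forall_norm_le_of_tendsto {E : Type*} [NormedAddCommGroup E] {f : ℝ → E}
    (hf : Continuous f) {x : E} (h : Tendsto f atTop (𝓝 x)) (a : ℝ) :
    ∃ C, ∀ t, a ≤ t → ‖f t‖ ≤ C := by
  obtain ⟨s, hs, hbdd⟩ := Metric.exists_isBounded_image_of_tendsto h
  obtain ⟨T, hT⟩ := mem_atTop_sets.1 hs
  obtain ⟨C, hC⟩ :=
    (((isCompact_Icc (a := a) (b := T)).image hf).isBounded.union hbdd).exists_norm_le
  refine ⟨C, fun t ht => hC _ ?_⟩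
  rcases le_total t T with htT | htT
  · exact Or.inl ⟨t, ⟨ht, htT⟩, rfl⟩
  · exact Or.inr ⟨t, hT t htT, rfl⟩

/- `NormedSpace.map_exp` needs a normed `ℚ`-algebra, which the L2 operator norm used below is
not. -/
open scoped Matrix.Norms.Operator in
theorem Matrix.exp_smul_eq_map_re {m : Type*} [Fintype m] [DecidableEq m] (M : Matrix m m ℝ)
    (t : ℝ) :
    exp (t • M) = (exp (t • M.map (algebraMap ℝ ℂ))).map Complex.re := by
  have hsmul : (t • M).map (algebraMap ℝ ℂ) = t • M.map (algebraMap ℝ ℂ) := by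
    ext i j
    simp
  have h : (exp (t • M)).map (algebraMap ℝ ℂ) = exp (t • M.map (algebraMap ℝ ℂ)) := by
    have := NormedSpace.map_exp (algebraMap ℝ ℂ).mapMatrix
      (continuous_id.matrix_map (continuous_algebraMap ℝ ℂ)) (t • M)
    simp only [RingHom.mapMatrix_apply] at this
    rwa [hsmul] at this
  ext i j
  rw [← h]
  simp

/- Unlike the Frobenius and `∞`-operator norms, the L2 operator norm induces the matrix topology up
to instance-reducible defeq, which `Integrable` on matrices needs; it is also submultiplicative on
rectangular matrices and invariant under transpose. -/
open scoped Matrix.Norms.L2Operator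

namespace Matrix

section MatrixMul

variable {ι κ ν : Type*} [Fintype ι] [Fintype κ] [Fintype ν] [DecidableEq κ] [DecidableEq ν]

noncomputable def mulCLM : Matrix ι κ ℝ →L[ℝ] Matrix κ ν ℝ →L[ℝ] Matrix ι ν ℝ :=
  LinearMap.toContinuousLinearMap <| LinearMap.toContinuousLinearMap.toLinearMap ∘ₗ
    LinearMap.mk₂ ℝ (· * ·) Matrix.add_mul Matrix.smul_mul Matrix.mul_add
      fun c M N => Matrix.mul_smul M c N

theorem _root_.HasDerivAt.matrix_mul {M : ℝ → Matrix ι κ ℝ} {N : ℝ → Matrix κ ν ℝ}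
    {M' : Matrix ι κ ℝ} {N' : Matrix κ ν ℝ} {t : ℝ}
    (hM : HasDerivAt M M' t) (hN : HasDerivAt N N' t) :
    HasDerivAt (fun s => M s * N s) (M' * N t + M t * N') t :=
  (mulCLM.hasDerivAt_of_bilinear (u := M) (v := N) (u' := M') (v' := N') (x := t)
    (fun _ => hM) (fun _ => hN)).congr_deriv (add_comm _ _)

end MatrixMul

section Exp

variable {m n : Type*} [Fintype m] [DecidableEq m] [Fintype n] [DecidableEq n]

theorem exp_add_algebraMap {𝕂 : Type*} [RCLike 𝕂] (x : Matrix m m 𝕂) (c : 𝕂) :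
    exp (x + algebraMap 𝕂 _ c) = exp c • exp x := by
  rw [add_comm, Matrix.exp_add_of_commute _ _ (Algebra.commutes c x), Algebra.smul_def]
  exact congrArg (· * exp x) (NormedSpace.algebraMap_exp_comm c).symm

theorem continuous_exp_smul (M : Matrix m m ℝ) : Continuous fun t : ℝ => exp (t • M) :=
  continuous_iff_continuousAt.2 fun t => (hasDerivAt_exp_smul_const M t).continuousAt

theorem hasDerivAt_exp_smul_mul_mul_exp_smul_transpose (A : Matrix m m ℝ) (D : Matrix n n ℝ)
    (P : Matrix m n ℝ) (t : ℝ) :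
    HasDerivAt (fun s : ℝ => exp (s • A) * P * (exp (s • D))ᵀ)
      (exp (t • A) * (A * P + P * Dᵀ) * (exp (t • D))ᵀ) t := by
  simp_rw [← exp_transpose, transpose_smul]
  convert ((hasDerivAt_exp_smul_const A t).matrix_mul (hasDerivAt_const t P)).matrix_mul
    (hasDerivAt_exp_smul_const' Dᵀ t) using 1
  simp only [Matrix.mul_add, Matrix.add_mul, Matrix.mul_assoc, Matrix.mul_zero, add_zero]

theorem exp_smul_mulVec_eq_sum {B : Matrix m m ℂ} {μ : ℂ} {v : m → ℂ} {K : ℕ}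
    (hv : ((B - μ • 1) ^ K) *ᵥ v = 0) (t : ℂ) :
    exp (t • B) *ᵥ v = ∑ j ∈ Finset.range K,
      (Complex.exp (t * μ) * t ^ j / j.factorial) • ((B - μ • 1) ^ j *ᵥ v) := by
  set N := B - μ • 1
  have hsplit : t • B = t • N + algebraMap ℂ _ (t * μ) := by
    simp [N, Algebra.algebraMap_eq_smul_one, smul_sub, smul_smul]
  have hseries : HasSum (fun j : ℕ => ((j.factorial : ℂ)⁻¹ • (t • N) ^ j) *ᵥ v)
      (exp (t • N) *ᵥ v) :=
    (NormedSpace.exp_series_hasSum_exp' (t • N)).map (mulVec.addMonoidHomLeft v)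
      (continuous_id.matrix_mulVec continuous_const)
  have hvanish : ∀ j ∉ Finset.range K, ((j.factorial : ℂ)⁻¹ • (t • N) ^ j) *ᵥ v = 0 := by
    intro j hj
    obtain ⟨i, rfl⟩ := Nat.exists_eq_add_of_le' (not_lt.1 (Finset.mem_range.not.1 hj))
    rw [smul_pow, smul_mulVec, smul_mulVec, pow_add N, ← mulVec_mulVec, hv]
    simp
  rw [hsplit, exp_add_algebraMap, smul_mulVec,
    hseries.unique (hasSum_sum_of_ne_finset_zero hvanish), Finset.smul_sum, ← Complex.exp_eq_exp_ℂ]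
  refine Finset.sum_congr rfl fun j _ => ?_
  rw [smul_pow, smul_mulVec, smul_mulVec, smul_smul, smul_smul]
  ring_nf

theorem tendsto_exp_smul_mulVec_of_pow_mulVec_eq_zero {B : Matrix m m ℂ} {μ : ℂ}
    (hμ : μ.re < 0) {v : m → ℂ} {K : ℕ} (hv : ((B - μ • 1) ^ K) *ᵥ v = 0) :
    Tendsto (fun t : ℝ => exp (t • B) *ᵥ v) atTop (𝓝 0) := by
  simp_rw [← Complex.coe_smul, exp_smul_mulVec_eq_sum hv]
  rw [← Finset.sum_const_zero (s := Finset.range K)]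
  refine tendsto_finsetSum _ fun j _ => ?_
  rw [← zero_smul ℂ ((B - μ • 1) ^ j *ᵥ v)]
  refine Tendsto.smul_const ?_ _
  have hbound := (tendsto_pow_mul_exp_mul_atTop_nhds_zero hμ j).div_const (j.factorial : ℝ)
  rw [zero_div] at hbound
  refine squeeze_zero_norm' ?_ hbound
  filter_upwards [eventually_ge_atTop 0] with t ht
  rw [norm_div, norm_mul, norm_pow, Complex.norm_exp, Complex.norm_real, Complex.norm_natCast,
    Real.norm_of_nonneg ht]
  simp [mul_comm]

theorem tendsto_exp_smul_mulVec_atTop_zero {B : Matrix m m ℂ}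
    (hB : ∀ μ ∈ spectrum ℂ B, μ.re < 0) (v : m → ℂ) :
    Tendsto (fun t : ℝ => exp (t • B) *ᵥ v) atTop (𝓝 0) := by
  have hv : v ∈ ⨆ μ, Module.End.maxGenEigenspace (toLin' B) μ := by
    rw [Module.End.iSup_maxGenEigenspace_eq_top]; trivial
  refine Submodule.iSup_induction _ (motive := fun w =>
    Tendsto (fun t : ℝ => exp (t • B) *ᵥ w) atTop (𝓝 0)) hv ?_ (by simp) fun x y hx hy => ?_
  · intro μ w hw
    obtain ⟨K, hK⟩ := (Module.End.mem_maxGenEigenspace _ _ _).1 hw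
    replace hK : ((B - μ • 1) ^ K) *ᵥ w = 0 := by
      rwa [← toLinAlgEquiv'_apply, map_pow, map_sub, map_smul, map_one]
    by_cases hμ : μ ∈ spectrum ℂ B
    · exact tendsto_exp_smul_mulVec_of_pow_mulVec_eq_zero (hB μ hμ) hK
    · have hunit : IsUnit ((B - μ • 1) ^ K) := by
        rw [← Algebra.algebraMap_eq_smul_one, ← neg_sub]
        exact (spectrum.notMem_iff.1 hμ).neg.pow K
      rw [mulVec_injective_iff_isUnit.2 hunit (hK.trans (mulVec_zero _).symm)]
      simp
  · simpa [mulVec_add] using hx.add hy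

theorem tendsto_exp_smul_atTop_zero {B : Matrix m m ℂ} (hB : ∀ μ ∈ spectrum ℂ B, μ.re < 0) :
    Tendsto (fun t : ℝ => exp (t • B)) atTop (𝓝 0) := by
  refine tendsto_pi_nhds.2 fun i => tendsto_pi_nhds.2 fun j => ?_
  simpa [mulVec_single_one] using
    tendsto_pi_nhds.1 (tendsto_exp_smul_mulVec_atTop_zero hB (Pi.single j 1)) i

end Exp

theorem mul_vecMulVec_mul_transpose {R ι κ μ ν : Type*} [CommSemiring R] [Fintype κ]
    [Fintype ν] (E : Matrix ι κ R) (F : Matrix μ ν R) (u : κ → R) (v : ν → R) :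
    E * vecMulVec u v * Fᵀ = vecMulVec (E *ᵥ u) (F *ᵥ v) := by
  rw [mul_vecMulVec, vecMulVec_mul, vecMul_transpose]

theorem sum_sub_mulVec_sq_eq_trace {R ι κ : Type*} [CommRing R] [Fintype ι] [Fintype κ]
    [DecidableEq κ] {U : Matrix ι κ R} (hU : Uᵀ * U = 1) (a : ι → R) (w : κ → R) :
    ∑ i, (a i - (U *ᵥ w) i) ^ 2 =
      trace (vecMulVec a a) + trace (vecMulVec w w) - 2 * trace (Uᵀ * vecMulVec a w) := by
  have hUw : (U *ᵥ w) ⬝ᵥ (U *ᵥ w) = w ⬝ᵥ w := by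
    rw [dotProduct_mulVec, ← mulVec_transpose, mulVec_mulVec, hU, one_mulVec]
  have hcross : trace (Uᵀ * vecMulVec a w) = a ⬝ᵥ (U *ᵥ w) := by
    rw [mul_vecMulVec, trace_vecMulVec, mulVec_transpose, dotProduct_mulVec]
  rw [trace_vecMulVec, trace_vecMulVec, hcross, ← hUw]
  simp only [dotProduct, sub_sq, Finset.sum_add_distrib, Finset.sum_sub_distrib, Finset.mul_sum]
  ring_nf

end Matrix

namespace IsStableMat

variable {k l : ℕ}

theorem tendsto_exp_smul_atTop_zero {M : Matrix (Fin k) (Fin k) ℝ} (hM : IsStableMat M) :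
    Tendsto (fun t : ℝ => exp (t • M)) atTop (𝓝 0) := by
  have hre : Continuous fun X : Matrix (Fin k) (Fin k) ℂ => X.map Complex.re :=
    continuous_id.matrix_map Complex.continuous_re
  have h := (hre.tendsto 0).comp
    (Matrix.tendsto_exp_smul_atTop_zero (B := M.map (algebraMap ℝ ℂ)) hM)
  rw [Matrix.map_zero _ Complex.zero_re] at h
  simp_rw [Matrix.exp_smul_eq_map_re]
  exact h

theorem exists_pos_add_smul_one {M : Matrix (Fin k) (Fin k) ℝ} (hM : IsStableMat M) :
    ∃ ε : ℝ, 0 < ε ∧ IsStableMat (M + ε • 1) := by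
  have hshift : ∀ᶠ ε in 𝓝 (0 : ℝ), ∀ μ ∈ spectrum ℂ (M.map (algebraMap ℝ ℂ)), μ.re + ε < 0 :=
    (Matrix.finite_spectrum _).eventually_all.2 fun μ hμ =>
      (tendsto_id.const_add μ.re).eventually_lt_const (by simpa using hM μ hμ)
  obtain ⟨ε, hε, hεpos⟩ :=
    ((hshift.filter_mono nhdsWithin_le_nhds).and (self_mem_nhdsWithin (s := Set.Ioi 0))).exists
  refine ⟨ε, hεpos, fun μ hμ => ?_⟩
  have hmap : (M + ε • 1).map (algebraMap ℝ ℂ) =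
      algebraMap ℂ _ (ε : ℂ) + M.map (algebraMap ℝ ℂ) := by
    ext i j
    by_cases hij : i = j <;> simp [Algebra.algebraMap_eq_smul_one, add_comm, hij]
  rw [hmap, ← spectrum.singleton_add_eq] at hμ
  obtain ⟨_, rfl, ν, hν, rfl⟩ := hμ
  simpa [add_comm] using hε ν hν

theorem exists_norm_exp_smul_le {M : Matrix (Fin k) (Fin k) ℝ} (hM : IsStableMat M) :
    ∃ C ε : ℝ, 0 < ε ∧ ∀ t, 0 ≤ t → ‖exp (t • M)‖ ≤ C * Real.exp (-ε * t) := by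
  obtain ⟨ε, hε, hMε⟩ := hM.exists_pos_add_smul_one
  obtain ⟨C, hC⟩ := exists_forall_norm_le_of_tendsto (Matrix.continuous_exp_smul _)
    hMε.tendsto_exp_smul_atTop_zero 0
  refine ⟨C, ε, hε, fun t ht => ?_⟩
  have hsplit : exp (t • M) = Real.exp (-ε * t) • exp (t • (M + ε • 1)) := by
    rw [Real.exp_eq_exp_ℝ, ← Matrix.exp_add_algebraMap, Algebra.algebraMap_eq_smul_one,
      smul_add, smul_smul, add_assoc, ← add_smul]
    simp [mul_comm]
  rw [hsplit, norm_smul, Real.norm_of_nonneg (Real.exp_pos _).le, mul_comm C]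
  exact mul_le_mul_of_nonneg_left (hC t ht) (Real.exp_pos _).le

theorem exists_norm_exp_smul_mul_mul_exp_smul_transpose_le {A : Matrix (Fin k) (Fin k) ℝ}
    {D : Matrix (Fin l) (Fin l) ℝ} (hA : IsStableMat A) (hD : IsStableMat D) :
    ∃ C ε : ℝ, 0 < ε ∧ ∀ (R : Matrix (Fin k) (Fin l) ℝ) (t : ℝ), 0 ≤ t →
      ‖exp (t • A) * R * (exp (t • D))ᵀ‖ ≤ C * ‖R‖ * Real.exp (-ε * t) := by
  obtain ⟨C₁, ε₁, hε₁, hA⟩ := hA.exists_norm_exp_smul_le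
  obtain ⟨C₂, ε₂, hε₂, hD⟩ := hD.exists_norm_exp_smul_le
  refine ⟨C₁ * C₂, ε₁ + ε₂, add_pos hε₁ hε₂, fun R t ht => ?_⟩
  have hC₁ : 0 ≤ C₁ * Real.exp (-ε₁ * t) := (norm_nonneg _).trans (hA t ht)
  calc ‖exp (t • A) * R * (exp (t • D))ᵀ‖
      ≤ ‖exp (t • A)‖ * ‖R‖ * ‖exp (t • D)‖ := by
        grw [l2_opNorm_mul, l2_opNorm_mul, ← conjTranspose_eq_transpose_of_trivial,
          l2_opNorm_conjTranspose]
    _ ≤ C₁ * Real.exp (-ε₁ * t) * ‖R‖ * (C₂ * Real.exp (-ε₂ * t)) := by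
        gcongr
        exacts [hA t ht, hD t ht]
    _ = C₁ * C₂ * ‖R‖ * Real.exp (-(ε₁ + ε₂) * t) := by
        rw [neg_add, add_mul, Real.exp_add]
        ring

theorem integrableOn_and_integral_of_sylvester {A : Matrix (Fin k) (Fin k) ℝ}
    {D : Matrix (Fin l) (Fin l) ℝ} {P Q : Matrix (Fin k) (Fin l) ℝ}
    (hA : IsStableMat A) (hD : IsStableMat D) (hP : A * P + P * Dᵀ = -Q) :
    IntegrableOn (fun t : ℝ => exp (t • A) * Q * (exp (t • D))ᵀ) (Set.Ioi 0) ∧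
      ∫ t in Set.Ioi (0 : ℝ), exp (t • A) * Q * (exp (t • D))ᵀ = P := by
  obtain ⟨C, ε, hε, hbound⟩ := hA.exists_norm_exp_smul_mul_mul_exp_smul_transpose_le hD
  have hint : ∀ R : Matrix (Fin k) (Fin l) ℝ,
      IntegrableOn (fun t : ℝ => exp (t • A) * R * (exp (t • D))ᵀ) (Set.Ioi 0) := fun R =>
    Integrable.mono' ((exp_neg_integrableOn_Ioi 0 hε).const_mul (C * ‖R‖))
      (((continuous_exp_smul A).matrix_mul continuous_const).matrix_mul
        (continuous_exp_smul D).matrix_transpose).aestronglyMeasurable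
      ((ae_restrict_iff' measurableSet_Ioi).2 (ae_of_all _ fun t ht => hbound R t ht.le))
  have hlim : Tendsto (fun t : ℝ => exp (t • A) * P * (exp (t • D))ᵀ) atTop (𝓝 0) := by
    have hexp := (Real.tendsto_exp_atBot.comp
      (tendsto_id.const_mul_atTop_of_neg (neg_lt_zero.2 hε))).const_mul (C * ‖P‖)
    rw [mul_zero] at hexp
    exact squeeze_zero_norm' ((eventually_ge_atTop 0).mono (hbound P)) hexp
  have hderiv : ∀ t : ℝ, HasDerivAt (fun s : ℝ => exp (s • A) * P * (exp (s • D))ᵀ)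
      (-(exp (t • A) * Q * (exp (t • D))ᵀ)) t := fun t =>
    (hasDerivAt_exp_smul_mul_mul_exp_smul_transpose A D P t).congr_deriv
      (by rw [hP, Matrix.mul_neg, Matrix.neg_mul])
  refine ⟨hint Q, ?_⟩
  simpa [integral_neg] using
    integral_Ioi_of_hasDerivAt_of_tendsto' (fun t _ => hderiv t) (hint Q).neg hlim

theorem integrableOn_and_integral_trace_of_sylvester {A : Matrix (Fin k) (Fin k) ℝ}
    {D : Matrix (Fin l) (Fin l) ℝ} {P Q : Matrix (Fin k) (Fin l) ℝ}
    (hA : IsStableMat A) (hD : IsStableMat D) (hP : A * P + P * Dᵀ = -Q)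
    (N : Matrix (Fin l) (Fin k) ℝ) :
    IntegrableOn (fun t : ℝ => trace (N * (exp (t • A) * Q * (exp (t • D))ᵀ))) (Set.Ioi 0) ∧
      ∫ t in Set.Ioi (0 : ℝ), trace (N * (exp (t • A) * Q * (exp (t • D))ᵀ)) = trace (N * P) := by
  obtain ⟨hint, hval⟩ := hA.integrableOn_and_integral_of_sylvester hD hP
  let L : Matrix (Fin k) (Fin l) ℝ →L[ℝ] ℝ :=
    (traceLinearMap (Fin l) ℝ ℝ).toContinuousLinearMap ∘L Matrix.mulCLM N
  exact ⟨L.integrable_comp hint, by rw [← hval]; exact L.integral_comp_comm hint⟩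

end IsStableMat

theorem functional_F_eq_traces {n r : ℕ}
    (A X : Matrix (Fin n) (Fin n) ℝ) (y₀ : Fin n → ℝ)
    (hA : IsStableMat A)
    (hX : A * X + X * Aᵀ = -vecMulVec y₀ y₀)
    (U : Matrix (Fin n) (Fin r) ℝ) (hU : Uᵀ * U = 1)
    (hB : IsStableMat (Uᵀ * A * U))
    (Z : Matrix (Fin r) (Fin r) ℝ)
    (hZ : (Uᵀ * A * U) * Z + Z * (Uᵀ * A * U)ᵀ = -vecMulVec (Uᵀ *ᵥ y₀) (Uᵀ *ᵥ y₀))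
    (P : Matrix (Fin n) (Fin r) ℝ)
    (hP : A * P + P * (Uᵀ * A * U)ᵀ = -vecMulVec y₀ (Uᵀ *ᵥ y₀)) :
    IntegrableOn
      (fun t : ℝ => ∑ i, ((mexp (t • A) *ᵥ y₀) i -
        (U *ᵥ (mexp (t • (Uᵀ * A * U)) *ᵥ (Uᵀ *ᵥ y₀))) i) ^ 2) (Set.Ioi 0) ∧
      ∫ t in Set.Ioi (0 : ℝ),
        ∑ i, ((mexp (t • A) *ᵥ y₀) i -
          (U *ᵥ (mexp (t • (Uᵀ * A * U)) *ᵥ (Uᵀ *ᵥ y₀))) i) ^ 2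
        = X.trace + Z.trace - 2 * (Uᵀ * P).trace := by
  set B := Uᵀ * A * U
  set c := Uᵀ *ᵥ y₀
  obtain ⟨hXint, hXval⟩ := hA.integrableOn_and_integral_trace_of_sylvester hA hX 1
  obtain ⟨hZint, hZval⟩ := hB.integrableOn_and_integral_trace_of_sylvester hB hZ 1
  obtain ⟨hPint, hPval⟩ := hA.integrableOn_and_integral_trace_of_sylvester hB hP Uᵀ
  simp only [Matrix.one_mul] at hXint hXval hZint hZval
  have hexpand : (fun t : ℝ => ∑ i, ((mexp (t • A) *ᵥ y₀) i - (U *ᵥ (mexp (t • B) *ᵥ c)) i) ^ 2)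
      = fun t => trace (exp (t • A) * vecMulVec y₀ y₀ * (exp (t • A))ᵀ)
        + trace (exp (t • B) * vecMulVec c c * (exp (t • B))ᵀ)
        - 2 * trace (Uᵀ * (exp (t • A) * vecMulVec y₀ c * (exp (t • B))ᵀ)) := by
    ext t
    simp only [mul_vecMulVec_mul_transpose]
    exact sum_sub_mulVec_sq_eq_trace hU _ _
  rw [hexpand]
  refine ⟨(hXint.add hZint).sub (hPint.const_mul 2), ?_⟩
  rw [integral_sub ?_ (hPint.const_mul 2), integral_add hXint hZint, integral_const_mul, hXval,
    hZval, hPval]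
  exact hXint.add hZint
end

section
/- Under these assumptions, F₂(U) = ∫₀^∞ (⟨y(t), ỹ(t)⟩ − ‖ỹ(t)‖²) dt converges and equals tr(Uᵀ(P − UZ)). -/
open Matrix MeasureTheory
open scoped Kronecker

open Filter Asymptotics Topology NormedSpace Finset
open scoped Nat

/-!
With `E t = exp (t A)` and `F t = exp (t B)`, the integrand is
`tr (Uᵀ E (y₀ c₀ᵀ) Fᵀ) - tr (F (c₀ c₀ᵀ) Fᵀ)`. Since `d/dt tr (W E X Fᵀ) = tr (W E (A X + X Bᵀ) Fᵀ)`,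
the Sylvester equations for `P` and `Z` exhibit the integrand as the derivative of
`-(tr (Uᵀ E P Fᵀ) - tr (F Z Fᵀ))`. Stability makes `E` and `F` decay exponentially (on a
generalized eigenspace for `μ`, `exp (t M)` acts as `e^{tμ}` times a polynomial in `t`), so the
integral converges and equals the value of the antiderivative at `t = 0`, which is
`tr (Uᵀ P) - tr Z = tr (Uᵀ (P - U Z))`.
-/

theorem Matrix.mulVec_dotProduct_mulVec {m n l : Type*} [Fintype m] [Fintype n] [Fintype l]
    {R : Type*} [CommSemiring R] (E : Matrix m n R) (F : Matrix m l R) (y : n → R) (c : l → R) :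
    (E *ᵥ y) ⬝ᵥ (F *ᵥ c) = (E * vecMulVec y c * Fᵀ).trace := by
  rw [mul_vecMulVec, vecMulVec_mul, vecMul_transpose, trace_vecMulVec]

theorem Matrix.mulVec_dotProduct_mulVec_of_transpose_mul_self {m n R : Type*} [Fintype m]
    [Fintype n] [DecidableEq n] [CommSemiring R] {U : Matrix m n R} (hU : Uᵀ * U = 1)
    (v w : n → R) : (U *ᵥ v) ⬝ᵥ (U *ᵥ w) = v ⬝ᵥ w := by
  rw [dotProduct_mulVec, ← mulVec_transpose, mulVec_mulVec, hU, one_mulVec]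

section

-- Any norm would do; the ℓ∞ operator norm makes square matrices a normed algebra, as the calculus
-- of `exp` requires.
attribute [local instance] Matrix.linftyOpNormedAddCommGroup Matrix.linftyOpNormedSpace
  Matrix.linftyOpNormedRing Matrix.linftyOpNormedAlgebra

section ExponentialDecay

variable {ι : Type*} [Fintype ι] [DecidableEq ι]

theorem Set.Finite.exists_pos_forall_re_lt_neg {s : Set ℂ} (hs : s.Finite)
    (h : ∀ μ ∈ s, μ.re < 0) : ∃ α > 0, ∀ μ ∈ s, μ.re < -α := by
  have hsmall : ∀ μ ∈ s, ∀ᶠ α in 𝓝 (0 : ℝ), μ.re < -α := fun μ hμ =>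
    (neg_zero (G := ℝ) ▸ continuous_neg.tendsto (0 : ℝ)).eventually (lt_mem_nhds (h μ hμ))
  exact (eventually_mem_nhdsWithin.and
    ((hs.eventually_all.2 hsmall).filter_mono nhdsWithin_le_nhds)).exists (f := 𝓝[>] 0)

theorem Matrix.mem_spectrum_of_mem_maxGenEigenspace {K : Type*} [Field K] {M : Matrix ι ι K}
    {μ : K} {v : ι → K} (hv : v ∈ Module.End.maxGenEigenspace (toLin' M) μ) (hv0 : v ≠ 0) :
    μ ∈ spectrum K M := by
  have hμ : Module.End.HasUnifEigenvalue (toLin' M) μ ⊤ := (Submodule.ne_bot_iff _).2 ⟨v, hv, hv0⟩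
  rw [← spectrum_toLin']
  exact Module.End.hasEigenvalue_iff_mem_spectrum.1 (hμ.lt zero_lt_one)

theorem Matrix.exp_smul_mulVec_eq_sum_s5 {M : Matrix ι ι ℂ} {μ : ℂ} {m : ℕ} {v : ι → ℂ}
    (hv : (M - μ • 1) ^ m *ᵥ v = 0) (t : ℂ) :
    exp (t • M) *ᵥ v =
      Complex.exp (t * μ) • ∑ j ∈ range m, (t ^ j / j !) • ((M - μ • 1) ^ j *ᵥ v) := by
  set N := M - μ • 1
  have hsplit : t • M = t • N + algebraMap ℂ _ (t * μ) := by
    rw [Algebra.algebraMap_eq_smul_one, smul_sub, smul_smul]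
    abel
  have hscalar : exp (algebraMap ℂ (Matrix ι ι ℂ) (t * μ)) = Complex.exp (t * μ) • 1 := by
    erw [← algebraMap_exp_comm (t * μ)]
    rw [← Complex.exp_eq_exp_ℂ, Algebra.algebraMap_eq_smul_one]
  have hseries : HasSum (fun j => ((j ! : ℂ)⁻¹ • (t • N) ^ j) *ᵥ v) (exp (t • N) *ᵥ v) :=
    (exp_series_hasSum_exp' (t • N)).map (mulVec.addMonoidHomLeft v)
      (continuous_id.matrix_mulVec continuous_const)
  have hterm (j : ℕ) : ((j ! : ℂ)⁻¹ • (t • N) ^ j) *ᵥ v = (t ^ j / j !) • (N ^ j *ᵥ v) := by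
    rw [smul_pow, smul_smul, smul_mulVec, div_eq_inv_mul]
  have hfinite : exp (t • N) *ᵥ v = ∑ j ∈ range m, (t ^ j / j !) • (N ^ j *ᵥ v) := by
    simp only [hterm] at hseries
    refine hseries.unique (hasSum_sum_of_ne_finset_zero fun j hj => ?_)
    obtain ⟨k, rfl⟩ := Nat.exists_eq_add_of_le (not_lt.mp (mem_range.not.mp hj))
    rw [pow_add N, pow_mul_comm N, ← mulVec_mulVec, hv, mulVec_zero, smul_zero]
  rw [hsplit, exp_add_of_commute _ _ (Algebra.commute_algebraMap_right _ _), hscalar,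
    mul_smul_comm, mul_one, smul_mulVec, hfinite]

theorem Matrix.isBigO_exp_smul_mulVec_of_pow_mulVec_eq_zero {M : Matrix ι ι ℂ} {μ : ℂ} {m : ℕ}
    {v : ι → ℂ} (hv : (M - μ • 1) ^ m *ᵥ v = 0) {α : ℝ} (hμ : μ.re < -α) :
    (fun t : ℝ => exp (t • M) *ᵥ v) =O[atTop] fun t => Real.exp (-α * t) := by
  have hε : 0 < -α - μ.re := by linarith
  have hexp : (fun t : ℝ => Complex.exp (t * μ)) =O[atTop] fun t => Real.exp (μ.re * t) :=
    isBigO_of_le _ fun t => by simp [Complex.norm_exp, mul_comm]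
  have hpoly : (fun t : ℝ => ∑ j ∈ range m, ((t : ℂ) ^ j / j !) • ((M - μ • 1) ^ j *ᵥ v))
      =O[atTop] fun t => Real.exp ((-α - μ.re) * t) := by
    refine IsBigO.fun_sum fun j _ => ?_
    have hcoeff : (fun t : ℝ => (t : ℂ) ^ j / j !) =O[atTop] fun t => t ^ j :=
      isBigO_of_le _ fun t => by
        rw [norm_div, norm_pow, Complex.norm_real, norm_pow]
        exact div_le_self (by positivity) (mod_cast Nat.factorial_pos j)
    have hvec := isBigO_const_const ((M - μ • 1) ^ j *ᵥ v) (one_ne_zero (α := ℝ)) (atTop : Filter ℝ)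
    refine ((hcoeff.smul hvec).congr_right fun t => ?_).trans
      (isLittleO_pow_exp_pos_mul_atTop j hε).isBigO
    rw [smul_eq_mul, mul_one]
  simp_rw [← Complex.coe_smul, exp_smul_mulVec_eq_sum_s5 hv]
  refine (hexp.smul hpoly).congr_right fun t => ?_
  rw [smul_eq_mul, ← Real.exp_add]
  ring_nf

theorem Matrix.isBigO_exp_smul_mulVec {M : Matrix ι ι ℂ} {α : ℝ}
    (hM : ∀ μ ∈ spectrum ℂ M, μ.re < -α) (v : ι → ℂ) :
    (fun t : ℝ => exp (t • M) *ᵥ v) =O[atTop] fun t => Real.exp (-α * t) := by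
  have hv : v ∈ ⨆ μ, Module.End.maxGenEigenspace (toLin' M) μ := by
    rw [Module.End.iSup_maxGenEigenspace_eq_top]
    exact Submodule.mem_top
  refine Submodule.iSup_induction _ (motive := fun w =>
    (fun t : ℝ => exp (t • M) *ᵥ w) =O[atTop] fun t => Real.exp (-α * t)) hv
    (fun μ w hw => ?_) (by simp only [mulVec_zero]; exact isBigO_zero _ _)
    (fun x y hx hy => by simpa only [mulVec_add] using hx.add hy)
  rcases eq_or_ne w 0 with rfl | hw0
  · simp only [mulVec_zero]; exact isBigO_zero _ _
  obtain ⟨m, hm⟩ := (Module.End.mem_maxGenEigenspace _ _ _).1 hw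
  refine isBigO_exp_smul_mulVec_of_pow_mulVec_eq_zero (m := m) ?_
    (hM μ (mem_spectrum_of_mem_maxGenEigenspace hw hw0))
  rwa [← toLinAlgEquiv'_apply, map_pow, map_sub, map_smul, map_one]

theorem Matrix.isBigO_of_forall_isBigO_apply {m n β 𝕜 : Type*} [Fintype m] [Fintype n]
    [DecidableEq m] [DecidableEq n] [NormedField 𝕜] {f : β → Matrix m n 𝕜} {g : β → ℝ}
    {l : Filter β} (h : ∀ i j, (fun x => f x i j) =O[l] g) : f =O[l] g := by
  have hsum : f = fun x => ∑ i, ∑ j, f x i j • single i j (1 : 𝕜) := by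
    ext x : 1
    conv_lhs => rw [matrix_eq_sum_single (f x)]
    simp only [smul_single, smul_eq_mul, mul_one]
  rw [hsum]
  refine IsBigO.fun_sum fun i _ => IsBigO.fun_sum fun j _ => ?_
  refine ((h i j).smul (isBigO_const_const (single i j (1 : 𝕜)) one_ne_zero l)).congr_right ?_
  simp

theorem mexp_map_algebraMap {k : ℕ} (M : Matrix (Fin k) (Fin k) ℝ) :
    (mexp M).map (algebraMap ℝ ℂ) = exp (M.map (algebraMap ℝ ℂ)) :=
  map_exp ((algebraMap ℝ ℂ).mapMatrix) (continuous_id.matrix_map Complex.continuous_ofReal) M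

theorem IsStableMat.exists_isBigO_mexp {k : ℕ} {M : Matrix (Fin k) (Fin k) ℝ}
    (hM : IsStableMat M) :
    ∃ α > 0, (fun t : ℝ => mexp (t • M)) =O[atTop] fun t => Real.exp (-α * t) := by
  obtain ⟨α, hα, hgap⟩ := (finite_spectrum _).exists_pos_forall_re_lt_neg hM
  refine ⟨α, hα, isBigO_of_forall_isBigO_apply fun i j => ?_⟩
  refine IsBigO.trans (isBigO_of_le _ fun t => ?_) (isBigO_exp_smul_mulVec hgap (Pi.single j 1))
  have hmap : (t • M).map (algebraMap ℝ ℂ) = t • M.map (algebraMap ℝ ℂ) := by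
    ext; simp
  calc ‖mexp (t • M) i j‖ = ‖exp (t • M.map (algebraMap ℝ ℂ)) i j‖ := by
        rw [← hmap, ← mexp_map_algebraMap, map_apply, Complex.coe_algebraMap, Complex.norm_real]
    _ ≤ _ := by
        rw [mulVec_single_one]
        exact norm_le_pi_norm (fun i => exp (t • M.map (algebraMap ℝ ℂ)) i j) i

end ExponentialDecay

section TraceFlow

variable {n r : ℕ}

-- Bundling `(E, F) ↦ tr (W E X Fᵀ)` as a continuous bilinear map gives both the product rule
-- and the bound `O(‖E‖ ‖F‖)`.
noncomputable def traceBilin (W : Matrix (Fin r) (Fin n) ℝ) (X : Matrix (Fin n) (Fin r) ℝ) :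
    Matrix (Fin n) (Fin n) ℝ →L[ℝ] Matrix (Fin r) (Fin r) ℝ →L[ℝ] ℝ :=
  (LinearMap.mk₂ ℝ (fun E F => (W * E * X * Fᵀ).trace)
    (fun E E' F => by simp only [Matrix.mul_add, Matrix.add_mul, trace_add])
    (fun c E F => by simp only [Matrix.mul_smul, Matrix.smul_mul, trace_smul])
    (fun E F F' => by simp only [transpose_add, Matrix.mul_add, trace_add])
    (fun c E F => by simp only [transpose_smul, Matrix.mul_smul, trace_smul]))
    |>.toContinuousBilinearMap

theorem hasDerivAt_trace_mexp_mul (W : Matrix (Fin r) (Fin n) ℝ) (A : Matrix (Fin n) (Fin n) ℝ)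
    (B : Matrix (Fin r) (Fin r) ℝ) (X : Matrix (Fin n) (Fin r) ℝ) (t : ℝ) :
    HasDerivAt (fun s => (W * mexp (s • A) * X * (mexp (s • B))ᵀ).trace)
      (W * mexp (t • A) * (A * X + X * Bᵀ) * (mexp (t • B))ᵀ).trace t := by
  have hA : A * mexp (t • A) = mexp (t • A) * A := ((Commute.refl A).smul_right t).exp_right
  have hB : B * mexp (t • B) = mexp (t • B) * B := ((Commute.refl B).smul_right t).exp_right
  refine ((traceBilin W X).hasDerivAt_of_bilinear (fun _ => hasDerivAt_exp_smul_const' A t)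
    (fun _ => hasDerivAt_exp_smul_const' B t)).congr_deriv ?_
  show (W * mexp (t • A) * X * (B * mexp (t • B))ᵀ).trace
    + (W * (A * mexp (t • A)) * X * (mexp (t • B))ᵀ).trace = _
  rw [hA, hB, transpose_mul]
  simp only [Matrix.mul_add, Matrix.add_mul, Matrix.mul_assoc, trace_add]
  ring

theorem exists_isBigO_trace_mexp_mul {A : Matrix (Fin n) (Fin n) ℝ} {B : Matrix (Fin r) (Fin r) ℝ}
    (hA : IsStableMat A) (hB : IsStableMat B) (W : Matrix (Fin r) (Fin n) ℝ)
    (X : Matrix (Fin n) (Fin r) ℝ) :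
    ∃ α > 0, (fun t : ℝ => (W * mexp (t • A) * X * (mexp (t • B))ᵀ).trace)
      =O[atTop] fun t => Real.exp (-α * t) := by
  obtain ⟨α, hα, hEA⟩ := hA.exists_isBigO_mexp
  obtain ⟨β, hβ, hEB⟩ := hB.exists_isBigO_mexp
  refine ⟨α + β, by positivity, ?_⟩
  refine ((traceBilin W X).isBoundedBilinearMap.isBigO_comp.trans
    (hEA.norm_left.mul hEB.norm_left)).congr_right fun t => ?_
  rw [← Real.exp_add]
  ring_nf

theorem integral_trace_mexp_mul_of_sylvester {A : Matrix (Fin n) (Fin n) ℝ}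
    {B : Matrix (Fin r) (Fin r) ℝ} (hA : IsStableMat A) (hB : IsStableMat B)
    (W : Matrix (Fin r) (Fin n) ℝ) {X Q : Matrix (Fin n) (Fin r) ℝ} (hX : A * X + X * Bᵀ = -Q) :
    IntegrableOn (fun t : ℝ => (W * mexp (t • A) * Q * (mexp (t • B))ᵀ).trace) (Set.Ioi 0) ∧
      ∫ t in Set.Ioi (0 : ℝ), (W * mexp (t • A) * Q * (mexp (t • B))ᵀ).trace = (W * X).trace := by
  have hderiv (t : ℝ) : HasDerivAt (fun s => (W * mexp (s • A) * X * (mexp (s • B))ᵀ).trace)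
      (-(W * mexp (t • A) * Q * (mexp (t • B))ᵀ).trace) t := by
    simpa only [hX, Matrix.mul_neg, Matrix.neg_mul, trace_neg]
      using hasDerivAt_trace_mexp_mul W A B X t
  have hcont : Continuous fun t : ℝ => (W * mexp (t • A) * Q * (mexp (t • B))ᵀ).trace :=
    continuous_iff_continuousAt.2 fun t => (hasDerivAt_trace_mexp_mul W A B Q t).continuousAt
  obtain ⟨α, hα, hQ⟩ := exists_isBigO_trace_mexp_mul hA hB W Q
  obtain ⟨β, hβ, hXO⟩ := exists_isBigO_trace_mexp_mul hA hB W X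
  have hint := integrable_of_isBigO_exp_neg (a := 0) hα hcont.continuousOn hQ
  have hlim : Tendsto (fun t : ℝ => (W * mexp (t • A) * X * (mexp (t • B))ᵀ).trace) atTop (𝓝 0) :=
    hXO.trans_tendsto (Real.tendsto_exp_atBot.comp
      (tendsto_id.const_mul_atTop_of_neg (neg_neg_of_pos hβ)))
  have hftc := integral_Ioi_of_hasDerivAt_of_tendsto' (fun t _ => hderiv t) hint.neg hlim
  have hstart : (W * mexp ((0 : ℝ) • A) * X * (mexp ((0 : ℝ) • B))ᵀ).trace = (W * X).trace := by
    simp only [zero_smul, mexp, exp_zero, Matrix.mul_one, transpose_one]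
  rw [integral_neg, hstart, zero_sub, neg_inj] at hftc
  exact ⟨hint, hftc⟩

end TraceFlow

end

theorem functional_F2_eq_trace {n r : ℕ}
    (A : Matrix (Fin n) (Fin n) ℝ) (y₀ : Fin n → ℝ)
    (hA : IsStableMat A)
    (U : Matrix (Fin n) (Fin r) ℝ) (hU : Uᵀ * U = 1)
    (hB : IsStableMat (Uᵀ * A * U))
    (Z : Matrix (Fin r) (Fin r) ℝ)
    (hZ : (Uᵀ * A * U) * Z + Z * (Uᵀ * A * U)ᵀ = -vecMulVec (Uᵀ *ᵥ y₀) (Uᵀ *ᵥ y₀))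
    (P : Matrix (Fin n) (Fin r) ℝ)
    (hP : A * P + P * (Uᵀ * A * U)ᵀ = -vecMulVec y₀ (Uᵀ *ᵥ y₀)) :
    IntegrableOn
      (fun t : ℝ => (∑ i, (mexp (t • A) *ᵥ y₀) i *
          (U *ᵥ (mexp (t • (Uᵀ * A * U)) *ᵥ (Uᵀ *ᵥ y₀))) i) -
        ∑ i, (U *ᵥ (mexp (t • (Uᵀ * A * U)) *ᵥ (Uᵀ *ᵥ y₀))) i ^ 2) (Set.Ioi 0) ∧
      ∫ t in Set.Ioi (0 : ℝ),
        ((∑ i, (mexp (t • A) *ᵥ y₀) i *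
            (U *ᵥ (mexp (t • (Uᵀ * A * U)) *ᵥ (Uᵀ *ᵥ y₀))) i) -
          ∑ i, (U *ᵥ (mexp (t • (Uᵀ * A * U)) *ᵥ (Uᵀ *ᵥ y₀))) i ^ 2)
        = (Uᵀ * (P - U * Z)).trace := by
  set B := Uᵀ * A * U
  set c₀ := Uᵀ *ᵥ y₀
  have hintegrand : (fun t : ℝ => (∑ i, (mexp (t • A) *ᵥ y₀) i * (U *ᵥ (mexp (t • B) *ᵥ c₀)) i) -
      ∑ i, (U *ᵥ (mexp (t • B) *ᵥ c₀)) i ^ 2) = fun t =>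
      (Uᵀ * mexp (t • A) * vecMulVec y₀ c₀ * (mexp (t • B))ᵀ).trace -
        (1 * mexp (t • B) * vecMulVec c₀ c₀ * (mexp (t • B))ᵀ).trace := by
    funext t
    simp only [sq]
    change (_ ⬝ᵥ _) - (_ ⬝ᵥ _) = _
    rw [mulVec_dotProduct_mulVec_of_transpose_mul_self hU, dotProduct_mulVec _ U,
      ← mulVec_transpose, mulVec_mulVec, mulVec_dotProduct_mulVec, mulVec_dotProduct_mulVec,
      Matrix.one_mul]
  obtain ⟨hint₁, hval₁⟩ := integral_trace_mexp_mul_of_sylvester hA hB Uᵀ hP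
  obtain ⟨hint₂, hval₂⟩ := integral_trace_mexp_mul_of_sylvester hB hB 1 hZ
  rw [hintegrand, integral_sub hint₁ hint₂, hval₁, hval₂, Matrix.mul_sub, trace_sub,
    ← Matrix.mul_assoc, hU]
  exact ⟨hint₁.sub hint₂, rfl⟩
end

section
/- Assume y₀ lies in the column space of U, i.e., y₀ = UUᵀy₀. Then the Lyapunov residual satisfies R₁(U) = ‖A(UZUᵀ) + (UZUᵀ)Aᵀ + y₀y₀ᵀ‖_F = √2 · ‖(AU − UB)Z‖_F. -/
open Matrix MeasureTheory
open scoped Kronecker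

/-!
Write `B = UᵀAU`, `c = Uᵀy₀` and `E = AU − UB`. Since `y₀ = Uc`, substituting
`ccᵀ = −(BZ + ZBᵀ)` turns the residual into `EZUᵀ + UZEᵀ`. As `B` is stable, the Lyapunov
equation has a unique solution, so `Z` is symmetric and the residual is `PUᵀ + UPᵀ` with `P = EZ`.
Finally `UᵀE = 0`, so the two summands are Frobenius-orthogonal, each of norm `‖P‖_F`.
-/

open Polynomial

namespace Matrix

variable {m n R K : Type*} [Fintype m] [DecidableEq m] [Fintype n] [DecidableEq n]

lemma aeval_mul_eq_mul_aeval [CommRing R] {B : Matrix m m R} {C : Matrix n n R}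
    {W : Matrix m n R} (h : B * W = W * C) (p : R[X]) : aeval B p * W = W * aeval C p := by
  have hpow : ∀ k : ℕ, B ^ k * W = W * C ^ k := fun k => by
    induction k with
    | zero => simp
    | succ k ih => rw [pow_succ, pow_succ, Matrix.mul_assoc, h, ← Matrix.mul_assoc, ih,
        Matrix.mul_assoc]
  induction p using Polynomial.induction_on' with
  | add p q hp hq => rw [map_add, map_add, Matrix.add_mul, Matrix.mul_add, hp, hq]
  | monomial k a =>
    rw [aeval_monomial, aeval_monomial, Matrix.mul_assoc, hpow, ← Matrix.mul_assoc,
      ← Matrix.mul_assoc, algebraMap_eq_diagonal, algebraMap_eq_diagonal]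
    congr 1
    exact (smul_eq_diagonal_mul W a).symm.trans (smul_eq_mul_diagonal W a)

/-- Sylvester's theorem. `χ_B(B) = 0` gives `W χ_B(C) = χ_B(B) W = 0`, and `χ_B(C)` is invertible
because its eigenvalues `χ_B(μ)`, `μ ∈ σ(C)`, are nonzero. -/
theorem eq_zero_of_mul_eq_mul_of_disjoint_spectrum [Field K] [IsAlgClosed K]
    {B : Matrix m m K} {C : Matrix n n K} {W : Matrix m n K}
    (hBC : Disjoint (spectrum K B) (spectrum K C)) (h : B * W = W * C) : W = 0 := by
  cases isEmpty_or_nonempty m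
  · exact Subsingleton.elim _ _
  have hdeg : 0 < B.charpoly.degree := by
    rw [charpoly_degree_eq_dim]; exact_mod_cast Fintype.card_pos
  have hunit : IsUnit (aeval C B.charpoly) := by
    by_contra hnot
    rw [← spectrum.zero_mem_iff K, spectrum.map_polynomial_aeval_of_degree_pos C _ hdeg] at hnot
    obtain ⟨μ, hμC, hμB⟩ := hnot
    exact hBC.notMem_of_mem_right hμC (mem_spectrum_iff_isRoot_charpoly.mpr hμB)
  obtain ⟨N, hN⟩ := hunit.exists_right_inv
  calc W = W * aeval C B.charpoly * N := by rw [Matrix.mul_assoc, hN, Matrix.mul_one]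
    _ = 0 := by rw [← aeval_mul_eq_mul_aeval h, aeval_self_charpoly, Matrix.zero_mul,
        Matrix.zero_mul]

lemma spectrum_transpose [Field K] (M : Matrix n n K) : spectrum K Mᵀ = spectrum K M := by
  ext μ
  rw [mem_spectrum_iff_isRoot_charpoly, mem_spectrum_iff_isRoot_charpoly, charpoly_transpose]

end Matrix

def lyapunovOp {n R : Type*} [Fintype n] [CommRing R] (A X : Matrix n n R) : Matrix n n R :=
  A * X + X * Aᵀ

section Stable

variable {k : ℕ} {B : Matrix (Fin k) (Fin k) ℝ}

lemma IsStableMat.eq_zero_of_lyapunovOp_eq_zero (hB : IsStableMat B) {W : Matrix (Fin k) (Fin k) ℝ}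
    (h : lyapunovOp B W = 0) : W = 0 := by
  -- over `ℂ`, `B W = W (-Bᵀ)` where `σ(-Bᵀ) = -σ(B)` lies in the open right half-plane
  let toℂ : Matrix (Fin k) (Fin k) ℝ →+* Matrix (Fin k) (Fin k) ℂ := (algebraMap ℝ ℂ).mapMatrix
  have hdisj : Disjoint (spectrum ℂ (toℂ B)) (spectrum ℂ (toℂ (-Bᵀ))) := by
    rw [Set.disjoint_left]
    intro μ hμ hμ'
    rw [map_neg, ← spectrum.neg_eq, Set.mem_neg, RingHom.mapMatrix_apply, transpose_map,
      spectrum_transpose] at hμ'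
    have hre : μ.re < 0 := hB _ hμ
    have hre' : (-μ).re < 0 := hB _ hμ'
    rw [Complex.neg_re] at hre'
    linarith
  have hW : toℂ B * toℂ W = toℂ W * toℂ (-Bᵀ) := by
    rw [← map_mul, ← map_mul, mul_neg, eq_neg_of_add_eq_zero_left h]
  exact (map_eq_zero_iff toℂ (map_injective (FaithfulSMul.algebraMap_injective ℝ ℂ))).mp
    (eq_zero_of_mul_eq_mul_of_disjoint_spectrum hdisj hW)

lemma IsStableMat.isSymm_of_lyapunovOp_eq (hB : IsStableMat B) {Z Q : Matrix (Fin k) (Fin k) ℝ}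
    (hQ : Q.IsSymm) (hZ : lyapunovOp B Z = Q) : Z.IsSymm := by
  have hZt : lyapunovOp B Zᵀ = Q := by
    rw [← hQ.eq, ← hZ]
    simp only [lyapunovOp, transpose_add, transpose_mul, transpose_transpose, add_comm]
  exact sub_eq_zero.mp <| hB.eq_zero_of_lyapunovOp_eq_zero <| by
    rw [lyapunovOp, Matrix.mul_sub, Matrix.sub_mul, sub_add_sub_comm]
    exact sub_eq_zero.mpr (hZt.trans hZ.symm)

end Stable

section Frobenius

variable {m l : Type*} [Fintype m] [Fintype l]

lemma frobNorm_eq_sqrt_trace (M : Matrix m l ℝ) : frobNorm M = √(Mᵀ * M).trace := by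
  simp only [frobNorm, trace, diag, mul_apply, transpose_apply, sq]
  rw [Finset.sum_comm]

/-- Cross terms vanish because the columns of `P` are orthogonal to those of `U`. -/
lemma frobNorm_mul_transpose_add_mul_transpose [DecidableEq l] {U P : Matrix m l ℝ}
    (hU : Uᵀ * U = 1) (hUP : Uᵀ * P = 0) :
    frobNorm (P * Uᵀ + U * Pᵀ) = √2 * frobNorm P := by
  have hPU : Pᵀ * U = 0 := by rw [← transpose_transpose U, ← transpose_mul, hUP, transpose_zero]
  have hsymm : (P * Uᵀ + U * Pᵀ)ᵀ = U * Pᵀ + P * Uᵀ := by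
    simp only [transpose_add, transpose_mul, transpose_transpose]
  have hPUPU : P * Uᵀ * (P * Uᵀ) = 0 := by
    rw [Matrix.mul_assoc, ← Matrix.mul_assoc Uᵀ, hUP, Matrix.zero_mul, Matrix.mul_zero]
  have hUPUP : U * Pᵀ * (U * Pᵀ) = 0 := by
    rw [Matrix.mul_assoc, ← Matrix.mul_assoc Pᵀ, hPU, Matrix.zero_mul, Matrix.mul_zero]
  have hPUUP : P * Uᵀ * (U * Pᵀ) = P * Pᵀ := by
    rw [Matrix.mul_assoc, ← Matrix.mul_assoc Uᵀ, hU, Matrix.one_mul]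
  have htrace : ((P * Uᵀ + U * Pᵀ)ᵀ * (P * Uᵀ + U * Pᵀ)).trace = 2 * (Pᵀ * P).trace := by
    rw [hsymm, Matrix.add_mul, Matrix.mul_add, Matrix.mul_add, hPUPU, hUPUP, add_zero, zero_add,
      trace_add, trace_mul_comm (U * Pᵀ), hPUUP, trace_mul_comm P, two_mul]
  rw [frobNorm_eq_sqrt_trace, frobNorm_eq_sqrt_trace, htrace, Real.sqrt_mul zero_le_two]

end Frobenius

lemma lyapunovOp_conj_sub_conj_lyapunovOp {n r R : Type*} [Fintype n] [Fintype r] [CommRing R]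
    (A : Matrix n n R) (U : Matrix n r R) {B Z : Matrix r r R} (hZ : Z.IsSymm) :
    lyapunovOp A (U * Z * Uᵀ) - U * lyapunovOp B Z * Uᵀ
      = (A * U - U * B) * Z * Uᵀ + U * ((A * U - U * B) * Z)ᵀ := by
  rw [transpose_mul, hZ.eq]
  simp only [lyapunovOp, transpose_sub, transpose_mul, Matrix.mul_sub,
    Matrix.sub_mul, Matrix.mul_add, Matrix.add_mul, Matrix.mul_assoc]
  abel

theorem lyapunov_residual_eq_sqrt_two_mul_general {n r : ℕ}
    (A : Matrix (Fin n) (Fin n) ℝ) (y₀ : Fin n → ℝ)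
    (U : Matrix (Fin n) (Fin r) ℝ) (hU : Uᵀ * U = 1)
    (hB : IsStableMat (Uᵀ * A * U))
    (hy : y₀ = U *ᵥ (Uᵀ *ᵥ y₀))
    (Z : Matrix (Fin r) (Fin r) ℝ)
    (hZ : (Uᵀ * A * U) * Z + Z * (Uᵀ * A * U)ᵀ = -vecMulVec (Uᵀ *ᵥ y₀) (Uᵀ *ᵥ y₀)) :
    frobNorm (A * (U * Z * Uᵀ) + (U * Z * Uᵀ) * Aᵀ + vecMulVec y₀ y₀)
      = Real.sqrt 2 * frobNorm ((A * U - U * (Uᵀ * A * U)) * Z) := by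
  set B := Uᵀ * A * U
  set c := Uᵀ *ᵥ y₀
  have hZsymm : Z.IsSymm := hB.isSymm_of_lyapunovOp_eq (IsSymm.neg (transpose_vecMulVec c c)) hZ
  have hyy : vecMulVec y₀ y₀ = U * vecMulVec c c * Uᵀ := by
    rw [mul_vecMulVec, vecMulVec_mul, vecMul_transpose, ← hy]
  have hres : A * (U * Z * Uᵀ) + (U * Z * Uᵀ) * Aᵀ + vecMulVec y₀ y₀
      = lyapunovOp A (U * Z * Uᵀ) - U * lyapunovOp B Z * Uᵀ := by
    rw [hyy, lyapunovOp, lyapunovOp, hZ, Matrix.mul_neg, Matrix.neg_mul, sub_neg_eq_add]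
  have hUE : Uᵀ * ((A * U - U * B) * Z) = 0 := by
    rw [← Matrix.mul_assoc, Matrix.mul_sub, ← Matrix.mul_assoc, ← Matrix.mul_assoc, hU,
      Matrix.one_mul, sub_self, Matrix.zero_mul]
  rw [hres, lyapunovOp_conj_sub_conj_lyapunovOp A U hZsymm]
  exact frobNorm_mul_transpose_add_mul_transpose hU hUE

theorem lyapunov_residual_eq_sqrt_two_mul {n r : ℕ}
    (A : Matrix (Fin n) (Fin n) ℝ) (y₀ : Fin n → ℝ)
    (hA : IsStableMat A)
    (U : Matrix (Fin n) (Fin r) ℝ) (hU : Uᵀ * U = 1)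
    (hB : IsStableMat (Uᵀ * A * U))
    (hy : y₀ = U *ᵥ (Uᵀ *ᵥ y₀))
    (Z : Matrix (Fin r) (Fin r) ℝ)
    (hZ : (Uᵀ * A * U) * Z + Z * (Uᵀ * A * U)ᵀ = -vecMulVec (Uᵀ *ᵥ y₀) (Uᵀ *ᵥ y₀)) :
    frobNorm (A * (U * Z * Uᵀ) + (U * Z * Uᵀ) * Aᵀ + vecMulVec y₀ y₀)
      = Real.sqrt 2 * frobNorm ((A * U - U * (Uᵀ * A * U)) * Z) :=
  lyapunov_residual_eq_sqrt_two_mul_general A y₀ U hU hB hy Z hZ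
end

section
/- Assume y₀ lies in the column space of U, i.e., y₀ = UUᵀy₀. Then the Sylvester residual satisfies R₂(U) = ‖A(UZ) + (UZ)Bᵀ + y₀c₀ᵀ‖_F = ‖(AU − UB)Z‖_F. -/
open Matrix MeasureTheory
open scoped Kronecker

/- Since `y₀ = U c₀`, the forcing term `y₀ c₀ᵀ = U c₀ c₀ᵀ` equals `-U (B Z + Z Bᵀ)` by the
reduced Lyapunov equation; the `U Z Bᵀ` terms then cancel and `A U Z - U B Z` remains. -/

theorem Matrix.residual_eq_of_add_eq_neg {l m p R : Type*} [Fintype l] [Fintype m] [Fintype p]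
    [Ring R] (A : Matrix l l R) (U : Matrix l m R) {B : Matrix m m R} {Z W : Matrix m p R}
    {C : Matrix p p R} (h : B * Z + Z * C = -W) :
    A * (U * Z) + U * Z * C + U * W = (A * U - U * B) * Z := by
  rw [neg_eq_iff_eq_neg.mp h.symm, Matrix.mul_neg, Matrix.mul_add]
  simp only [Matrix.sub_mul, Matrix.mul_assoc]
  abel

theorem sylvester_residual_eq_general {n r : ℕ}
    (A : Matrix (Fin n) (Fin n) ℝ) (y₀ : Fin n → ℝ)
    (U : Matrix (Fin n) (Fin r) ℝ)
    (hy : y₀ = U *ᵥ (Uᵀ *ᵥ y₀))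
    (Z : Matrix (Fin r) (Fin r) ℝ)
    (hZ : (Uᵀ * A * U) * Z + Z * (Uᵀ * A * U)ᵀ = -vecMulVec (Uᵀ *ᵥ y₀) (Uᵀ *ᵥ y₀)) :
    frobNorm (A * (U * Z) + (U * Z) * (Uᵀ * A * U)ᵀ + vecMulVec y₀ (Uᵀ *ᵥ y₀))
      = frobNorm ((A * U - U * (Uᵀ * A * U)) * Z) := by
  have hforcing : vecMulVec y₀ (Uᵀ *ᵥ y₀) = U * vecMulVec (Uᵀ *ᵥ y₀) (Uᵀ *ᵥ y₀) := by
    rw [mul_vecMulVec, ← hy]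
  rw [hforcing, Matrix.residual_eq_of_add_eq_neg A U hZ]

theorem sylvester_residual_eq {n r : ℕ}
    (A : Matrix (Fin n) (Fin n) ℝ) (y₀ : Fin n → ℝ)
    (hA : IsStableMat A)
    (U : Matrix (Fin n) (Fin r) ℝ) (hU : Uᵀ * U = 1)
    (hB : IsStableMat (Uᵀ * A * U))
    (hy : y₀ = U *ᵥ (Uᵀ *ᵥ y₀))
    (Z : Matrix (Fin r) (Fin r) ℝ)
    (hZ : (Uᵀ * A * U) * Z + Z * (Uᵀ * A * U)ᵀ = -vecMulVec (Uᵀ *ᵥ y₀) (Uᵀ *ᵥ y₀)) :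
    frobNorm (A * (U * Z) + (U * Z) * (Uᵀ * A * U)ᵀ + vecMulVec y₀ (Uᵀ *ᵥ y₀))
      = frobNorm ((A * U - U * (Uᵀ * A * U)) * Z) :=
  sylvester_residual_eq_general A y₀ U hy Z hZ
end

section
/- Assume y₀ lies in the column space of U, i.e., y₀ = UUᵀy₀, and that the nr×nr matrix I⊗A + B⊗I is invertible. Then ‖P − UZ‖_F ≤ ‖(I⊗A + B⊗I)⁻¹‖_F · R₂(U), where R₂(U) = ‖A(UZ) + (UZ)Bᵀ + y₀c₀ᵀ‖_F. -/
open Matrix MeasureTheory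
open scoped Kronecker

/-! The error `E = P - U Z` solves the Sylvester equation `A E + E Bᵀ = -R`, where `R` is the
residual of `U Z`. Vectorizing turns this into `(I ⊗ A + B ⊗ I) vec E = -vec R`, so
`vec E = -(I ⊗ A + B ⊗ I)⁻¹ vec R`, and the Frobenius norm is submultiplicative. -/

theorem Matrix.kronecker_add_mulVec_vec {m n R : Type*} [Fintype m] [Fintype n]
    [DecidableEq m] [DecidableEq n] [CommSemiring R]
    (A : Matrix m m R) (B : Matrix n n R) (X : Matrix m n R) :
    (1 ⊗ₖ A + B ⊗ₖ 1) *ᵥ vec X = vec (A * X + X * Bᵀ) := by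
  rw [add_mulVec, kronecker_mulVec_vec, kronecker_mulVec_vec, vec_add, transpose_one,
    Matrix.mul_one, Matrix.one_mul]

section Frobenius

attribute [local instance] Matrix.frobeniusNormedAddCommGroup

variable {m n 𝕜 : Type*} [Fintype m] [Fintype n] [RCLike 𝕜]

theorem frobNorm_eq_norm (M : Matrix m n ℝ) : frobNorm M = ‖M‖ := by
  simp only [frobNorm, frobenius_norm_def, Real.norm_eq_abs, Real.rpow_two, sq_abs,
    Real.sqrt_eq_rpow, one_div]

theorem Matrix.frobenius_norm_replicateCol_vec (X : Matrix m n 𝕜) :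
    ‖replicateCol Unit (vec X)‖ = ‖X‖ := by
  simp only [frobenius_norm_def, replicateCol_apply, Finset.univ_unique, Finset.sum_singleton,
    vec, Fintype.sum_prod_type]
  rw [Finset.sum_comm]

theorem Matrix.frobenius_norm_le_inv_mul_of_mulVec_vec [DecidableEq m] [DecidableEq n]
    {M : Matrix (n × m) (n × m) 𝕜} (hM : IsUnit M) {X C : Matrix m n 𝕜}
    (hX : M *ᵥ vec X = vec C) : ‖X‖ ≤ ‖M⁻¹‖ * ‖C‖ := by
  have hvec : vec X = M⁻¹ *ᵥ vec C := by
    rw [← hX, mulVec_mulVec, nonsing_inv_mul M ((isUnit_iff_isUnit_det M).mp hM), one_mulVec]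
  rw [← frobenius_norm_replicateCol_vec X, ← frobenius_norm_replicateCol_vec C, hvec,
    replicateCol_mulVec]
  exact frobenius_norm_mul _ _

theorem frobNorm_neg (M : Matrix m n ℝ) : frobNorm (-M) = frobNorm M := by
  rw [frobNorm_eq_norm, frobNorm_eq_norm, norm_neg]

theorem frobNorm_le_of_sylvester [DecidableEq m] [DecidableEq n]
    {A : Matrix m m ℝ} {B : Matrix n n ℝ} (hAB : IsUnit (1 ⊗ₖ A + B ⊗ₖ 1))
    {X C : Matrix m n ℝ} (hX : A * X + X * Bᵀ = C) :
    frobNorm X ≤ frobNorm (1 ⊗ₖ A + B ⊗ₖ 1)⁻¹ * frobNorm C := by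
  rw [frobNorm_eq_norm, frobNorm_eq_norm, frobNorm_eq_norm]
  exact frobenius_norm_le_inv_mul_of_mulVec_vec hAB (by rw [kronecker_add_mulVec_vec, hX])

end Frobenius

theorem error_bound_sylvester_residual_general {n r : ℕ}
    (A : Matrix (Fin n) (Fin n) ℝ) (y₀ : Fin n → ℝ)
    (U : Matrix (Fin n) (Fin r) ℝ)
    (Z : Matrix (Fin r) (Fin r) ℝ)
    (P : Matrix (Fin n) (Fin r) ℝ)
    (hP : A * P + P * (Uᵀ * A * U)ᵀ = -vecMulVec y₀ (Uᵀ *ᵥ y₀))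
    (hinv : IsUnit ((1 : Matrix (Fin r) (Fin r) ℝ) ⊗ₖ A
      + (Uᵀ * A * U) ⊗ₖ (1 : Matrix (Fin n) (Fin n) ℝ))) :
    frobNorm (P - U * Z)
      ≤ frobNorm (((1 : Matrix (Fin r) (Fin r) ℝ) ⊗ₖ A
          + (Uᵀ * A * U) ⊗ₖ (1 : Matrix (Fin n) (Fin n) ℝ))⁻¹)
        * frobNorm (A * (U * Z) + (U * Z) * (Uᵀ * A * U)ᵀ + vecMulVec y₀ (Uᵀ *ᵥ y₀)) := by
  have hresidual : A * (P - U * Z) + (P - U * Z) * (Uᵀ * A * U)ᵀ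
      = -(A * (U * Z) + (U * Z) * (Uᵀ * A * U)ᵀ + vecMulVec y₀ (Uᵀ *ᵥ y₀)) := by
    rw [Matrix.mul_sub, Matrix.sub_mul, sub_add_sub_comm, hP]
    abel
  simpa only [frobNorm_neg] using frobNorm_le_of_sylvester hinv hresidual

theorem error_bound_sylvester_residual {n r : ℕ}
    (A : Matrix (Fin n) (Fin n) ℝ) (y₀ : Fin n → ℝ)
    (hA : IsStableMat A)
    (U : Matrix (Fin n) (Fin r) ℝ) (hU : Uᵀ * U = 1)
    (hB : IsStableMat (Uᵀ * A * U))
    (hy : y₀ = U *ᵥ (Uᵀ *ᵥ y₀))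
    (Z : Matrix (Fin r) (Fin r) ℝ)
    (hZ : (Uᵀ * A * U) * Z + Z * (Uᵀ * A * U)ᵀ = -vecMulVec (Uᵀ *ᵥ y₀) (Uᵀ *ᵥ y₀))
    (P : Matrix (Fin n) (Fin r) ℝ)
    (hP : A * P + P * (Uᵀ * A * U)ᵀ = -vecMulVec y₀ (Uᵀ *ᵥ y₀))
    (hinv : IsUnit ((1 : Matrix (Fin r) (Fin r) ℝ) ⊗ₖ A
      + (Uᵀ * A * U) ⊗ₖ (1 : Matrix (Fin n) (Fin n) ℝ))) :
    frobNorm (P - U * Z)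
      ≤ frobNorm (((1 : Matrix (Fin r) (Fin r) ℝ) ⊗ₖ A
          + (Uᵀ * A * U) ⊗ₖ (1 : Matrix (Fin n) (Fin n) ℝ))⁻¹)
        * frobNorm (A * (U * Z) + (U * Z) * (Uᵀ * A * U)ᵀ + vecMulVec y₀ (Uᵀ *ᵥ y₀)) :=
  error_bound_sylvester_residual_general A y₀ U Z P hP hinv
end

section
/- Assume y₀ lies in the column space of U, i.e., y₀ = UUᵀy₀. Then the matrix P₁ = P − UZ satisfies the Sylvester equation A P₁ + P₁ Bᵀ = −(AU − UB)Z. -/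
open Matrix MeasureTheory
open scoped Kronecker

theorem sylvester_sub_mul_of_forcing_eq_mul {l m k R : Type*} [Fintype l] [Fintype m] [Fintype k]
    [Ring R] {A : Matrix l l R} {B : Matrix m m R} {M : Matrix k k R} {U : Matrix l m R}
    {P : Matrix l k R} {Z F : Matrix m k R}
    (hP : A * P + P * M = -(U * F)) (hZ : B * Z + Z * M = -F) :
    A * (P - U * Z) + (P - U * Z) * M = -((A * U - U * B) * Z) := by
  have hZM : Z * M = -F - B * Z := eq_sub_of_add_eq' hZ
  calc A * (P - U * Z) + (P - U * Z) * M
      = (A * P + P * M) - A * U * Z - U * (Z * M) := by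
        simp only [Matrix.mul_sub, Matrix.sub_mul, Matrix.mul_assoc]; abel
    _ = -((A * U - U * B) * Z) := by
        rw [hP, hZM]
        simp only [Matrix.mul_sub, Matrix.sub_mul, Matrix.mul_neg, Matrix.mul_assoc]; abel

theorem correction_sylvester_equation_general {n r : ℕ}
    (A : Matrix (Fin n) (Fin n) ℝ) (y₀ : Fin n → ℝ)
    (U : Matrix (Fin n) (Fin r) ℝ)
    (hy : y₀ = U *ᵥ (Uᵀ *ᵥ y₀))
    (Z : Matrix (Fin r) (Fin r) ℝ)
    (hZ : (Uᵀ * A * U) * Z + Z * (Uᵀ * A * U)ᵀ = -vecMulVec (Uᵀ *ᵥ y₀) (Uᵀ *ᵥ y₀))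
    (P : Matrix (Fin n) (Fin r) ℝ)
    (hP : A * P + P * (Uᵀ * A * U)ᵀ = -vecMulVec y₀ (Uᵀ *ᵥ y₀)) :
    A * (P - U * Z) + (P - U * Z) * (Uᵀ * A * U)ᵀ
      = -((A * U - U * (Uᵀ * A * U)) * Z) := by
  have hforcing : vecMulVec y₀ (Uᵀ *ᵥ y₀) = U * vecMulVec (Uᵀ *ᵥ y₀) (Uᵀ *ᵥ y₀) := by
    rw [mul_vecMulVec, ← hy]
  exact sylvester_sub_mul_of_forcing_eq_mul (hforcing ▸ hP) hZ

theorem correction_sylvester_equation {n r : ℕ}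
    (A : Matrix (Fin n) (Fin n) ℝ) (y₀ : Fin n → ℝ)
    (U : Matrix (Fin n) (Fin r) ℝ) (hU : Uᵀ * U = 1)
    (hy : y₀ = U *ᵥ (Uᵀ *ᵥ y₀))
    (Z : Matrix (Fin r) (Fin r) ℝ)
    (hZ : (Uᵀ * A * U) * Z + Z * (Uᵀ * A * U)ᵀ = -vecMulVec (Uᵀ *ᵥ y₀) (Uᵀ *ᵥ y₀))
    (P : Matrix (Fin n) (Fin r) ℝ)
    (hP : A * P + P * (Uᵀ * A * U)ᵀ = -vecMulVec y₀ (Uᵀ *ᵥ y₀)) :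
    A * (P - U * Z) + (P - U * Z) * (Uᵀ * A * U)ᵀ
      = -((A * U - U * (Uᵀ * A * U)) * Z) :=
  correction_sylvester_equation_general A y₀ U hy Z hZ P hP
end

section
/- Let U be an n×r real matrix with orthonormal columns, w, v ∈ ℝⁿ, q ∈ ℝʳ, and s ∈ ℝ be such that (I − UUᵀ)AU = wqᵀ, the matrix A + sI is invertible, and v = (A + sI)⁻¹w. Let U₂ be an n×m real matrix with orthonormal columns whose column span equals the span of the columns of U together with v and w. Then there exists a vector q̂ ∈ ℝᵐ such that (I − U₂U₂ᵀ) A U₂ = ((I − U₂U₂ᵀ) A w) q̂ᵀ. -/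
open Matrix MeasureTheory
open scoped Kronecker

/-!
The projector `1 - U₂ U₂ᵀ` vanishes on `S = span(cols U, v, w)`, the column space of `U₂`.
The residual condition gives `A U = U (Uᵀ A U) + w qᵀ` and `(A + sI) v = w` gives
`A v = w - s v`, so `A` maps `S` into `S + ℝ A w`: only `A w` leaves `S`. Hence the projected
image of every column of `U₂` is a multiple of `(1 - U₂ U₂ᵀ) A w`.
-/

open Submodule

theorem Submodule.apply_apply_mem_span_singleton_of_le_ker {R M N : Type*} [Semiring R]
    [AddCommMonoid M] [AddCommMonoid N] [Module R M] [Module R N]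
    {S : Submodule R M} {f : M →ₗ[R] M} {P : M →ₗ[R] N} {y : M}
    (hP : S ≤ LinearMap.ker P) (hf : S ≤ (S ⊔ R ∙ y).comap f) {x : M} (hx : x ∈ S) :
    P (f x) ∈ R ∙ P y := by
  obtain ⟨s, hs, t, ht, hst⟩ := mem_sup.mp (hf hx)
  obtain ⟨c, rfl⟩ := mem_span_singleton.mp ht
  rw [← hst, map_add, LinearMap.mem_ker.mp (hP hs), zero_add, map_smul]
  exact smul_mem _ c (mem_span_singleton_self _)

namespace Matrix

variable {R l m n : Type*}

theorem col_mul [Fintype m] [NonUnitalNonAssocSemiring R] (M : Matrix l m R) (N : Matrix m n R)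
    (j : n) : (M * N).col j = M *ᵥ N.col j :=
  rfl

theorem col_add [Add R] (M N : Matrix m n R) (j : n) : (M + N).col j = M.col j + N.col j :=
  rfl

theorem exists_eq_vecMulVec_of_col_mem_span_singleton [CommSemiring R] (M : Matrix m n R)
    (z : m → R) (h : ∀ j, M.col j ∈ R ∙ z) : ∃ c : n → R, M = vecMulVec z c := by
  choose c hc using fun j => mem_span_singleton.mp (h j)
  refine ⟨c, ?_⟩
  ext i j
  rw [vecMulVec_apply, ← col_apply M j i, ← hc j, Pi.smul_apply, smul_eq_mul, mul_comm]

variable [CommRing R] [Fintype m] [Fintype n] [DecidableEq m]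

theorem span_col_le_ker_one_sub_mul_transpose [DecidableEq n] {U : Matrix m n R}
    (hU : Uᵀ * U = 1) : span R (Set.range U.col) ≤ LinearMap.ker (1 - U * Uᵀ).mulVecLin := by
  rw [← range_mulVecLin, LinearMap.range_le_ker_iff, ← mulVecLin_mul, Matrix.sub_mul,
    Matrix.one_mul, Matrix.mul_assoc, hU, Matrix.mul_one, sub_self, mulVecLin_zero]

theorem mulVec_col_mem_of_residual_eq_vecMulVec {A : Matrix m m R} {U : Matrix m n R}
    {w : m → R} {q : n → R} (hres : (1 - U * Uᵀ) * A * U = vecMulVec w q) (j : n) :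
    A *ᵥ U.col j ∈ span R (Set.range U.col) ⊔ R ∙ w := by
  have hAU : A * U = U * (Uᵀ * A * U) + vecMulVec w q := by
    rw [← hres, Matrix.sub_mul, Matrix.sub_mul, Matrix.one_mul, Matrix.mul_assoc U,
      Matrix.mul_assoc U]
    abel
  have hcol : A *ᵥ U.col j = U *ᵥ (Uᵀ * A * U).col j + q j • w := by
    rw [← col_mul, hAU, col_add, col_mul, col_vecMulVec, op_smul_eq_smul]
  rw [hcol, ← range_mulVecLin]
  exact add_mem (mem_sup_left ⟨_, rfl⟩)
    (mem_sup_right (smul_mem _ _ (mem_span_singleton_self w)))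

theorem mulVec_inv_add_smul_one_mulVec {A : Matrix m m R} {s : R} (h : IsUnit (A + s • 1))
    (w : m → R) : A *ᵥ ((A + s • 1)⁻¹ *ᵥ w) = w - s • ((A + s • 1)⁻¹ *ᵥ w) := by
  have hw : (A + s • 1) *ᵥ ((A + s • 1)⁻¹ *ᵥ w) = w := by
    rw [mulVec_mulVec, mul_nonsing_inv _ ((isUnit_iff_isUnit_det _).mp h), one_mulVec]
  rw [add_mulVec, smul_mulVec, one_mulVec] at hw
  exact eq_sub_of_add_eq hw

theorem span_col_union_pair_le_comap_mulVecLin {A : Matrix m m R} {U : Matrix m n R}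
    {v w : m → R} {q : n → R} (hres : (1 - U * Uᵀ) * A * U = vecMulVec w q)
    (hv : A *ᵥ v ∈ span R {v, w}) :
    span R (Set.range U.col ∪ {v, w}) ≤
      (span R (Set.range U.col ∪ {v, w}) ⊔ R ∙ (A *ᵥ w)).comap A.mulVecLin := by
  have hw : w ∈ span R (Set.range U.col ∪ {v, w}) := subset_span (by simp)
  refine span_le.mpr ?_
  rintro x (⟨j, rfl⟩ | rfl | rfl)
  · exact mem_sup_left <| sup_le (span_mono Set.subset_union_left)
      (span_singleton_le_iff_mem _ _ |>.mpr hw) (mulVec_col_mem_of_residual_eq_vecMulVec hres j)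
  · exact mem_sup_left (span_mono Set.subset_union_right hv)
  · exact mem_sup_right (mem_span_singleton_self _)

end Matrix

theorem rank_one_residual_after_enrichment_general {n r m : ℕ}
    (A : Matrix (Fin n) (Fin n) ℝ)
    (U : Matrix (Fin n) (Fin r) ℝ)
    (w v : Fin n → ℝ) (q : Fin r → ℝ) (s : ℝ)
    (hres : (1 - U * Uᵀ) * A * U = vecMulVec w q)
    (hinv : IsUnit (A + s • (1 : Matrix (Fin n) (Fin n) ℝ)))
    (hv : v = (A + s • (1 : Matrix (Fin n) (Fin n) ℝ))⁻¹ *ᵥ w)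
    (U₂ : Matrix (Fin n) (Fin m) ℝ) (hU₂ : U₂ᵀ * U₂ = 1)
    (hspan : Submodule.span ℝ (Set.range (fun i : Fin m => (fun j => U₂ j i : Fin n → ℝ)))
      = Submodule.span ℝ
          (Set.range (fun i : Fin r => (fun j => U j i : Fin n → ℝ)) ∪ {v, w})) :
    ∃ qhat : Fin m → ℝ,
      (1 - U₂ * U₂ᵀ) * A * U₂ = vecMulVec ((1 - U₂ * U₂ᵀ) *ᵥ (A *ᵥ w)) qhat := by
  have hAv : A *ᵥ v ∈ span ℝ {v, w} := by
    rw [hv, mulVec_inv_add_smul_one_mulVec hinv]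
    exact sub_mem (subset_span (by simp)) (smul_mem _ _ (subset_span (by simp)))
  have hcols : span ℝ (Set.range U₂.col) = span ℝ (Set.range U.col ∪ {v, w}) := hspan
  have hmap : span ℝ (Set.range U₂.col) ≤
      (span ℝ (Set.range U₂.col) ⊔ ℝ ∙ (A *ᵥ w)).comap A.mulVecLin := by
    rw [hcols]
    exact span_col_union_pair_le_comap_mulVecLin hres hAv
  refine exists_eq_vecMulVec_of_col_mem_span_singleton _ _ fun j => ?_
  have hj := apply_apply_mem_span_singleton_of_le_ker
    (span_col_le_ker_one_sub_mul_transpose hU₂) hmap (subset_span ⟨j, rfl⟩)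
  rwa [col_mul, ← mulVec_mulVec]

theorem rank_one_residual_after_enrichment {n r m : ℕ}
    (A : Matrix (Fin n) (Fin n) ℝ)
    (hA : IsStableMat A)
    (U : Matrix (Fin n) (Fin r) ℝ) (hU : Uᵀ * U = 1)
    (w v : Fin n → ℝ) (q : Fin r → ℝ) (s : ℝ)
    (hres : (1 - U * Uᵀ) * A * U = vecMulVec w q)
    (hinv : IsUnit (A + s • (1 : Matrix (Fin n) (Fin n) ℝ)))
    (hv : v = (A + s • (1 : Matrix (Fin n) (Fin n) ℝ))⁻¹ *ᵥ w)
    (U₂ : Matrix (Fin n) (Fin m) ℝ) (hU₂ : U₂ᵀ * U₂ = 1)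
    (hspan : Submodule.span ℝ (Set.range (fun i : Fin m => (fun j => U₂ j i : Fin n → ℝ)))
      = Submodule.span ℝ
          (Set.range (fun i : Fin r => (fun j => U j i : Fin n → ℝ)) ∪ {v, w})) :
    ∃ qhat : Fin m → ℝ,
      (1 - U₂ * U₂ᵀ) * A * U₂ = vecMulVec ((1 - U₂ * U₂ᵀ) *ᵥ (A *ᵥ w)) qhat :=
  rank_one_residual_after_enrichment_general A U w v q s hres hinv hv U₂ hU₂ hspan
end

section
/- Let U be an n×r real matrix with orthonormal columns, w, v ∈ ℝⁿ, q ∈ ℝʳ, and s ∈ ℝ be such that (I − UUᵀ)AU = wqᵀ, the matrix A + sI is invertible, and v = (A + sI)⁻¹w. Let U₂ be an n×m real matrix with orthonormal columns whose column span equals the span of the columns of U together with v and w. Then (I − U₂U₂ᵀ) A U = 0 and (I − U₂U₂ᵀ) A v = 0. -/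
open Matrix MeasureTheory
open scoped Kronecker

/-!
Both `A U = w qᵀ + U (Uᵀ A U)` and `A v = w - s v` lie in the span of the columns of `U`
together with `v` and `w`, which is the column span of `U₂`; and `1 - U₂ U₂ᵀ` annihilates
the columns of `U₂` because `U₂ᵀ U₂ = 1`.
-/

open Submodule

namespace Matrix

variable {R : Type*} [CommRing R] {l ι κ : Type*} [Fintype ι]

lemma mul_col (P : Matrix l ι R) (U : Matrix ι κ R) (j : κ) : (P * U).col j = P *ᵥ U.col j :=
  rfl

lemma mul_eq_zero_of_forall_mulVec_col {P : Matrix l ι R} {U : Matrix ι κ R}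
    (h : ∀ j, P *ᵥ U.col j = 0) : P * U = 0 :=
  ext_col fun j => (mul_col P U j).trans (h j)

variable [DecidableEq ι]

lemma mulVec_eq_sub_smul_of_eq_inv_add_smul_one {A : Matrix ι ι R} {s : R} {v w : ι → R}
    (hinv : IsUnit (A + s • (1 : Matrix ι ι R))) (hv : v = (A + s • (1 : Matrix ι ι R))⁻¹ *ᵥ w) :
    A *ᵥ v = w - s • v := by
  have hw : (A + s • (1 : Matrix ι ι R)) *ᵥ v = w := by
    rw [hv, mulVec_mulVec, mul_nonsing_inv _ ((isUnit_iff_isUnit_det _).mp hinv), one_mulVec]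
  rw [← hw, add_mulVec, smul_mulVec, one_mulVec, add_sub_cancel_right]

variable [Fintype κ]

lemma mul_mul_eq_zero_of_residual_eq_vecMulVec {A : Matrix ι ι R} {U : Matrix ι κ R}
    {P : Matrix l ι R} {w : ι → R} {q : κ → R}
    (hres : (1 - U * Uᵀ) * A * U = vecMulVec w q) (hPw : P *ᵥ w = 0) (hPU : P * U = 0) :
    P * A * U = 0 := by
  have hAU : A * U = vecMulVec w q + U * (Uᵀ * A * U) := by
    simp only [← hres, Matrix.sub_mul, Matrix.one_mul, Matrix.mul_assoc, sub_add_cancel]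
  rw [Matrix.mul_assoc, hAU, Matrix.mul_add, mul_vecMulVec, hPw, ← Matrix.mul_assoc, hPU,
    Matrix.zero_mul, add_zero, zero_vecMulVec]

variable [DecidableEq κ]

lemma one_sub_mul_transpose_mulVec_eq_zero_of_mem_span {Q : Matrix ι κ R} (hQ : Qᵀ * Q = 1)
    {x : ι → R} (hx : x ∈ span R (Set.range Q.col)) : (1 - Q * Qᵀ) *ᵥ x = 0 := by
  rw [← range_mulVecLin] at hx
  obtain ⟨c, rfl⟩ := hx
  rw [mulVecLin_apply, mulVec_mulVec, Matrix.sub_mul, Matrix.one_mul, Matrix.mul_assoc, hQ,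
    Matrix.mul_one, sub_self, zero_mulVec]

end Matrix

theorem enriched_projection_annihilates_general {n r m : ℕ}
    (A : Matrix (Fin n) (Fin n) ℝ)
    (U : Matrix (Fin n) (Fin r) ℝ)
    (w v : Fin n → ℝ) (q : Fin r → ℝ) (s : ℝ)
    (hres : (1 - U * Uᵀ) * A * U = vecMulVec w q)
    (hinv : IsUnit (A + s • (1 : Matrix (Fin n) (Fin n) ℝ)))
    (hv : v = (A + s • (1 : Matrix (Fin n) (Fin n) ℝ))⁻¹ *ᵥ w)
    (U₂ : Matrix (Fin n) (Fin m) ℝ) (hU₂ : U₂ᵀ * U₂ = 1)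
    (hspan : Submodule.span ℝ (Set.range (fun i : Fin m => (fun j => U₂ j i : Fin n → ℝ)))
      = Submodule.span ℝ
          (Set.range (fun i : Fin r => (fun j => U j i : Fin n → ℝ)) ∪ {v, w})) :
    (1 - U₂ * U₂ᵀ) * A * U = 0 ∧ (1 - U₂ * U₂ᵀ) *ᵥ (A *ᵥ v) = 0 := by
  have hP : ∀ x ∈ span ℝ (Set.range U.col ∪ {v, w}), (1 - U₂ * U₂ᵀ) *ᵥ x = 0 := fun x hx =>
    one_sub_mul_transpose_mulVec_eq_zero_of_mem_span hU₂ (by exact hspan ▸ hx)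
  have hPw := hP w (subset_span (by simp))
  have hPv := hP v (subset_span (by simp))
  have hPU := mul_eq_zero_of_forall_mulVec_col fun j => hP _ (subset_span (Or.inl ⟨j, rfl⟩))
  refine ⟨mul_mul_eq_zero_of_residual_eq_vecMulVec hres hPw hPU, ?_⟩
  rw [mulVec_eq_sub_smul_of_eq_inv_add_smul_one hinv hv, mulVec_sub, mulVec_smul, hPw, hPv,
    smul_zero, sub_zero]

theorem enriched_projection_annihilates {n r m : ℕ}
    (A : Matrix (Fin n) (Fin n) ℝ)
    (U : Matrix (Fin n) (Fin r) ℝ) (hU : Uᵀ * U = 1)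
    (w v : Fin n → ℝ) (q : Fin r → ℝ) (s : ℝ)
    (hres : (1 - U * Uᵀ) * A * U = vecMulVec w q)
    (hinv : IsUnit (A + s • (1 : Matrix (Fin n) (Fin n) ℝ)))
    (hv : v = (A + s • (1 : Matrix (Fin n) (Fin n) ℝ))⁻¹ *ᵥ w)
    (U₂ : Matrix (Fin n) (Fin m) ℝ) (hU₂ : U₂ᵀ * U₂ = 1)
    (hspan : Submodule.span ℝ (Set.range (fun i : Fin m => (fun j => U₂ j i : Fin n → ℝ)))
      = Submodule.span ℝ
          (Set.range (fun i : Fin r => (fun j => U j i : Fin n → ℝ)) ∪ {v, w})) :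
    (1 - U₂ * U₂ᵀ) * A * U = 0 ∧ (1 - U₂ * U₂ᵀ) *ᵥ (A *ᵥ v) = 0 :=
  enriched_projection_annihilates_general A U w v q s hres hinv hv U₂ hU₂ hspan
end

section
/- Define, for an n×r matrix V, the function Φ(V) = tr X + tr Z(V) − 2 tr(Vᵀ P(V)), where B(V) = VᵀAV, c₀(V) = Vᵀy₀, Z(V) solves B(V)Z + Z B(V)ᵀ = −c₀(V)c₀(V)ᵀ, and P(V) solves A P + P B(V)ᵀ = −y₀ c₀(V)ᵀ. Let U be an n×r matrix with orthonormal columns such that B = B(U) is stable, let Z = Z(U), P = P(U), c₀ = c₀(U), and let P_U solve Aᵀ P_U + P_U B = −U and Z_I solve Bᵀ Z_I + Z_I B = −I_r. Then for every n×r direction matrix D, the derivative of ε ↦ Φ(U + εD) at ε = 0 exists and equals tr(Dᵀ G), where G = −2P + 2 y₀ (c₀ᵀ Z_I − y₀ᵀ P_U) + 2 A U (Z Z_I − Pᵀ P_U) + 2 Aᵀ U (Z_I Z − P_Uᵀ P). -/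
open Matrix MeasureTheory
open scoped Kronecker

/-!
Along the line `V = U + ε D` the matrices `Z(V)` and `P(V)` solve Sylvester equations
`M Y + Y Nᵀ = C` with `M`, `N` stable. The spectra of `M` and `-Nᵀ` then lie in opposite open
half-planes, so the Sylvester operator is invertible (Cayley–Hamilton for `M`, evaluated at
`-Nᵀ`); hence the solutions are differentiable in `ε`, and differentiating the equations gives
Sylvester equations for `Z'` and `P'`. Pairing these with the adjoint solutions `Z_I` and `P_U`
through `tr (Wᵀ (M Y + Y Nᵀ)) = tr ((Mᵀ W + W N)ᵀ Y)` turns `tr Z'` and `tr (Uᵀ P')` into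
`tr (Dᵀ ·)` of explicit matrices, and the symmetry of `Z` and `Z_I` collects them into `G`.
-/

open Polynomial Filter Topology

section SpectralSylvester

variable {ι κ : Type*} [Fintype ι] [DecidableEq ι] [Fintype κ] [DecidableEq κ]

theorem Matrix.aeval_mul_eq_mul_aeval_s19 {R : Type*} [CommRing R] {M : Matrix ι ι R}
    {N : Matrix κ κ R} {Y : Matrix ι κ R} (h : M * Y = Y * N) (p : R[X]) :
    aeval M p * Y = Y * aeval N p := by
  induction p using Polynomial.induction_on with
  | C a => simp [Algebra.algebraMap_eq_smul_one]
  | add p q hp hq => simp only [map_add, Matrix.add_mul, Matrix.mul_add, hp, hq]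
  | monomial k a ih =>
    rw [pow_succ, ← mul_assoc, map_mul (aeval M), map_mul (aeval N), aeval_X, aeval_X,
      Matrix.mul_assoc, h, ← Matrix.mul_assoc, ih, Matrix.mul_assoc]

theorem Matrix.isUnit_aeval_charpoly_of_disjoint {M : Matrix ι ι ℂ} {N : Matrix κ κ ℂ}
    (h : Disjoint (spectrum ℂ M) (spectrum ℂ N)) : IsUnit (aeval N M.charpoly) := by
  rcases isEmpty_or_nonempty ι with hι | hι
  · simp [Matrix.charpoly_isEmpty]
  rw [← spectrum.zero_notMem_iff ℂ, spectrum.map_polynomial_aeval_of_degree_pos _ _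
    (by rw [charpoly_degree_eq_dim]; exact_mod_cast Fintype.card_pos)]
  rintro ⟨μ, hμN, hμ⟩
  exact h.ne_of_mem (Matrix.mem_spectrum_iff_isRoot_charpoly.mpr hμ) hμN rfl

theorem Matrix.eq_zero_of_mul_eq_mul_of_disjoint_spectrum_s19 {M : Matrix ι ι ℂ}
    {N : Matrix κ κ ℂ} {Y : Matrix ι κ ℂ} (hMN : Disjoint (spectrum ℂ M) (spectrum ℂ N))
    (h : M * Y = Y * N) : Y = 0 := by
  have hY : Y * aeval N M.charpoly = 0 := by
    rw [← aeval_mul_eq_mul_aeval_s19 h, aeval_self_charpoly, Matrix.zero_mul]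
  obtain ⟨u, hu⟩ := isUnit_aeval_charpoly_of_disjoint hMN
  calc Y = Y * ((u * u⁻¹ : (Matrix κ κ ℂ)ˣ) : Matrix κ κ ℂ) := by simp
    _ = 0 := by rw [Units.val_mul, ← Matrix.mul_assoc, hu, hY, Matrix.zero_mul]

theorem Matrix.spectrum_transpose_s19 {K : Type*} [Field K] (M : Matrix ι ι K) :
    spectrum K Mᵀ = spectrum K M := by
  ext μ
  simp only [Matrix.mem_spectrum_iff_isRoot_charpoly, charpoly_transpose]

end SpectralSylvester

theorem IsStableMat.transpose {k : ℕ} {M : Matrix (Fin k) (Fin k) ℝ} (hM : IsStableMat M) :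
    IsStableMat Mᵀ := by
  intro μ hμ
  rw [transpose_map, spectrum_transpose_s19] at hμ
  exact hM μ hμ

theorem IsStableMat.eq_zero_of_sylvester {p q : ℕ} {M : Matrix (Fin p) (Fin p) ℝ}
    {N : Matrix (Fin q) (Fin q) ℝ} (hM : IsStableMat M) (hN : IsStableMat N)
    {Y : Matrix (Fin p) (Fin q) ℝ} (h : M * Y + Y * Nᵀ = 0) : Y = 0 := by
  set f := algebraMap ℝ ℂ
  have hdisj : Disjoint (spectrum ℂ (M.map f)) (spectrum ℂ (-(N.map f)ᵀ)) := by
    rw [Set.disjoint_left]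
    intro μ hμM hμN
    rw [← spectrum.neg_eq, Set.mem_neg, spectrum_transpose_s19] at hμN
    have hre_neg := hN _ hμN
    have hre := hM μ hμM
    rw [Complex.neg_re] at hre_neg
    linarith
  have hYc : M.map f * Y.map f = Y.map f * -(N.map f)ᵀ := by
    rw [Matrix.mul_neg, ← transpose_map, ← Matrix.map_mul, ← Matrix.map_mul,
      eq_neg_iff_add_eq_zero, ← Matrix.map_add _ (map_add f), h, Matrix.map_zero _ (map_zero f)]
  exact Matrix.map_injective f.injective
    ((eq_zero_of_mul_eq_mul_of_disjoint_spectrum_s19 hdisj hYc).trans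
      (Matrix.map_zero _ (map_zero f)).symm)

theorem IsStableMat.transpose_eq_of_lyapunov {k : ℕ} {B Z C : Matrix (Fin k) (Fin k) ℝ}
    (hB : IsStableMat B) (hC : Cᵀ = C) (h : B * Z + Z * Bᵀ = C) : Zᵀ = Z := by
  have hT : B * Zᵀ + Zᵀ * Bᵀ = C := by
    rw [← hC, ← h, transpose_add, transpose_mul, transpose_mul, transpose_transpose, add_comm]
  refine (sub_eq_zero.mp (hB.eq_zero_of_sylvester hB ?_)).symm
  rw [Matrix.mul_sub, Matrix.sub_mul, sub_add_sub_comm, h, hT, sub_self]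

section NormedCalculus

variable {𝕜 E F G : Type*} [NontriviallyNormedField 𝕜] [NormedAddCommGroup E]
  [NormedSpace 𝕜 E] {x : 𝕜}

theorem exists_hasDerivAt_of_apply_eq [CompleteSpace E] {L : 𝕜 → E →L[𝕜] E} {L' : E →L[𝕜] E}
    {c y : 𝕜 → E} {c' : E} (hL : HasDerivAt L L' x) (hc : HasDerivAt c c' x)
    (hLx : IsUnit (L x)) (hy : ∀ᶠ t in 𝓝 x, L t (y t) = c t) :
    ∃ y', HasDerivAt y y' x ∧ L x y' + L' (y x) = c' := by
  have hunit : ∀ᶠ t in 𝓝 x, IsUnit (L t) :=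
    hL.continuousAt.eventually (Units.isOpen.mem_nhds hLx)
  have hy_eq : y =ᶠ[𝓝 x] fun t => Ring.inverse (L t) (c t) := by
    filter_upwards [hy, hunit] with t ht hLt
    rw [← ht]
    exact (congrArg (fun T => T (y t)) (Ring.inverse_mul_cancel _ hLt)).symm
  have hdiff : DifferentiableAt 𝕜 y x :=
    hy_eq.differentiableAt_iff.mpr
      (((differentiableAt_inverse hLx).comp x hL.differentiableAt).hasDerivAt.clm_apply
        hc).differentiableAt
  refine ⟨deriv y x, hdiff.hasDerivAt, ?_⟩
  rw [add_comm]
  exact (hL.clm_apply hdiff.hasDerivAt).unique (hc.congr_of_eventuallyEq hy)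

theorem LinearMap.hasDerivAt_of_bilinear [NormedAddCommGroup F] [NormedSpace 𝕜 F]
    [NormedAddCommGroup G] [NormedSpace 𝕜 G] [FiniteDimensional 𝕜 E] [FiniteDimensional 𝕜 F]
    [CompleteSpace 𝕜] (B : E →ₗ[𝕜] F →ₗ[𝕜] G) {u : 𝕜 → E} {v : 𝕜 → F} {u' : E} {v' : F}
    (hu : HasDerivAt u u' x) (hv : HasDerivAt v v' x) :
    HasDerivAt (fun t => B (u t) (v t)) (B u' (v x) + B (u x) v') x := by
  let B' : E →L[𝕜] F →L[𝕜] G :=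
    LinearMap.toContinuousLinearMap (LinearMap.toContinuousLinearMap.toLinearMap ∘ₗ B)
  rw [add_comm]
  exact B'.hasDerivAt_of_bilinear (fun _ => hu) (fun _ => hv)

end NormedCalculus

section MatrixAnalysis

/- Derivatives of matrix-valued functions refer to the product topology on matrices; the sup norm
is only an auxiliary device that makes the normed-space calculus available. -/
attribute [local instance] Matrix.normedAddCommGroup Matrix.normedSpace

section MatrixCalculus

variable {l m n : Type*} [Fintype l] [Fintype m] [Fintype n] {x : ℝ}

theorem HasDerivAt.matrix_mul_s19 {f : ℝ → Matrix l m ℝ} {g : ℝ → Matrix m n ℝ} {f' g'}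
    (hf : HasDerivAt f f' x) (hg : HasDerivAt g g' x) :
    HasDerivAt (fun t => f t * g t) (f' * g x + f x * g') x :=
  (mulLinearMap ℝ).hasDerivAt_of_bilinear hf hg

theorem HasDerivAt.matrix_mulVec {f : ℝ → Matrix m n ℝ} {v : ℝ → n → ℝ} {f' v'}
    (hf : HasDerivAt f f' x) (hv : HasDerivAt v v' x) :
    HasDerivAt (fun t => f t *ᵥ v t) (f' *ᵥ v x + f x *ᵥ v') x :=
  (mulVecBilin ℝ ℝ).hasDerivAt_of_bilinear hf hv

theorem HasDerivAt.vecMulVec {u : ℝ → m → ℝ} {v : ℝ → n → ℝ} {u' v'}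
    (hu : HasDerivAt u u' x) (hv : HasDerivAt v v' x) :
    HasDerivAt (fun t => vecMulVec (u t) (v t)) (vecMulVec u' (v x) + vecMulVec (u x) v') x :=
  (vecMulVecBilin ℝ ℝ).hasDerivAt_of_bilinear hu hv

theorem HasDerivAt.matrix_transpose {f : ℝ → Matrix m n ℝ} {f'} (hf : HasDerivAt f f' x) :
    HasDerivAt (fun t => (f t)ᵀ) f'ᵀ x :=
  (transposeLinearEquiv m n ℝ ℝ).toLinearMap.toContinuousLinearMap.hasFDerivAt.comp_hasDerivAt x hf

theorem HasDerivAt.matrix_trace {f : ℝ → Matrix m m ℝ} {f'} (hf : HasDerivAt f f' x) :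
    HasDerivAt (fun t => (f t).trace) f'.trace x :=
  (traceLinearMap m ℝ ℝ).toContinuousLinearMap.hasFDerivAt.comp_hasDerivAt x hf

end MatrixCalculus

section SylvesterOperator

variable {m k : Type*} [Fintype m] [Fintype k]

noncomputable def sylvesterOp (M : Matrix m m ℝ) (N : Matrix k k ℝ) :
    Matrix m k ℝ →L[ℝ] Matrix m k ℝ :=
  LinearMap.toContinuousLinearMap (mulLeftLinearMap k ℝ M + mulRightLinearMap m ℝ Nᵀ)

@[simp]
theorem sylvesterOp_apply (M : Matrix m m ℝ) (N : Matrix k k ℝ) (Y : Matrix m k ℝ) :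
    sylvesterOp M N Y = M * Y + Y * Nᵀ :=
  rfl

theorem HasDerivAt.sylvesterOp {M : ℝ → Matrix m m ℝ} {N : ℝ → Matrix k k ℝ} {M' N'} {x : ℝ}
    (hM : HasDerivAt M M' x) (hN : HasDerivAt N N' x) :
    HasDerivAt (fun t => sylvesterOp (M t) (N t)) (sylvesterOp M' N') x := by
  let S : Matrix m m ℝ × Matrix k k ℝ →ₗ[ℝ] Matrix m k ℝ →L[ℝ] Matrix m k ℝ :=
    { toFun := fun p => _root_.sylvesterOp p.1 p.2
      map_add' := fun p q => by
        ext1 Y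
        simp only [sylvesterOp_apply, Prod.fst_add, Prod.snd_add, transpose_add,
          Matrix.add_mul, Matrix.mul_add, _root_.add_apply]
        abel
      map_smul' := fun c p => by
        ext1 Y
        simp [Matrix.smul_mul, Matrix.mul_smul, smul_add] }
  -- instance search does not unfold `Matrix.normedAddCommGroup` to reach the operator norm
  let : NormedAddCommGroup (Matrix m k ℝ →L[ℝ] Matrix m k ℝ) :=
    ContinuousLinearMap.toNormedAddCommGroup
  let : NormedSpace ℝ (Matrix m k ℝ →L[ℝ] Matrix m k ℝ) := ContinuousLinearMap.toNormedSpace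
  exact S.toContinuousLinearMap.hasFDerivAt.comp_hasDerivAt x (hM.prodMk hN)

theorem IsStableMat.isUnit_sylvesterOp {p q : ℕ} {M : Matrix (Fin p) (Fin p) ℝ}
    {N : Matrix (Fin q) (Fin q) ℝ} (hM : IsStableMat M) (hN : IsStableMat N) :
    IsUnit (sylvesterOp M N) := by
  have hinj : Function.Injective (sylvesterOp M N) :=
    (injective_iff_map_eq_zero _).mpr fun _ hY => hM.eq_zero_of_sylvester hN hY
  exact ContinuousLinearMap.isUnit_iff_bijective.mpr
    ⟨hinj, LinearMap.injective_iff_surjective.mp hinj⟩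

theorem exists_hasDerivAt_sylvester_solution {p q : ℕ}
    {M : ℝ → Matrix (Fin p) (Fin p) ℝ} {N : ℝ → Matrix (Fin q) (Fin q) ℝ}
    {C Y : ℝ → Matrix (Fin p) (Fin q) ℝ} {M' N' C'} {x : ℝ}
    (hM : HasDerivAt M M' x) (hN : HasDerivAt N N' x) (hC : HasDerivAt C C' x)
    (hMx : IsStableMat (M x)) (hNx : IsStableMat (N x))
    (hY : ∀ᶠ t in 𝓝 x, M t * Y t + Y t * (N t)ᵀ = C t) :
    ∃ Y', HasDerivAt Y Y' x ∧ M x * Y' + Y' * (N x)ᵀ + (M' * Y x + Y x * N'ᵀ) = C' :=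
  exists_hasDerivAt_of_apply_eq (hM.sylvesterOp hN) hC (hMx.isUnit_sylvesterOp hNx) hY

end SylvesterOperator

section Line

theorem Matrix.tendsto_add_smul_nhds_zero {m n : Type*} (U D : Matrix m n ℝ) :
    Tendsto (fun t : ℝ => U + t • D) (𝓝 0) (𝓝 U) :=
  (continuous_const.add (continuous_id.smul continuous_const)).tendsto' 0 U (by simp)

variable {m n : Type*} [Fintype m] [Fintype n] (U D : Matrix m n ℝ)

theorem Matrix.hasDerivAt_add_smul (x : ℝ) : HasDerivAt (fun t : ℝ => U + t • D) D x :=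
  (((hasDerivAt_id x).smul_const D).const_add U).congr_deriv (one_smul ℝ D)

theorem Matrix.hasDerivAt_transpose_mul_mul_add_smul (A : Matrix m m ℝ) :
    HasDerivAt (fun t : ℝ => (U + t • D)ᵀ * A * (U + t • D)) (Dᵀ * A * U + Uᵀ * A * D) 0 := by
  have hV := hasDerivAt_add_smul U D 0
  simpa using (hV.matrix_transpose.matrix_mul_s19 (hasDerivAt_const 0 A)).matrix_mul_s19 hV

theorem Matrix.hasDerivAt_transpose_add_smul_mulVec (y : m → ℝ) :
    HasDerivAt (fun t : ℝ => (U + t • D)ᵀ *ᵥ y) (Dᵀ *ᵥ y) 0 := by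
  simpa using (hasDerivAt_add_smul U D 0).matrix_transpose.matrix_mulVec (hasDerivAt_const 0 y)

end Line

variable {n r : ℕ} {A : Matrix (Fin n) (Fin n) ℝ} {y₀ : Fin n → ℝ} {U : Matrix (Fin n) (Fin r) ℝ}

theorem IsStableMat.exists_hasDerivAt_lyapunov_along_line (hB : IsStableMat (Uᵀ * A * U))
    {Z : Matrix (Fin n) (Fin r) ℝ → Matrix (Fin r) (Fin r) ℝ}
    (hZ : ∀ᶠ V in 𝓝 U,
      (Vᵀ * A * V) * Z V + Z V * (Vᵀ * A * V)ᵀ = -vecMulVec (Vᵀ *ᵥ y₀) (Vᵀ *ᵥ y₀))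
    (D : Matrix (Fin n) (Fin r) ℝ) :
    ∃ Z', HasDerivAt (fun ε : ℝ => Z (U + ε • D)) Z' 0 ∧
      Uᵀ * A * U * Z' + Z' * (Uᵀ * A * U)ᵀ
        + ((Dᵀ * A * U + Uᵀ * A * D) * Z U + Z U * (Dᵀ * A * U + Uᵀ * A * D)ᵀ)
        = -(vecMulVec (Dᵀ *ᵥ y₀) (Uᵀ *ᵥ y₀) + vecMulVec (Uᵀ *ᵥ y₀) (Dᵀ *ᵥ y₀)) := by
  have hB0 : IsStableMat ((U + (0 : ℝ) • D)ᵀ * A * (U + (0 : ℝ) • D)) := by simpa using hB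
  have hBV := hasDerivAt_transpose_mul_mul_add_smul U D A
  have hc := hasDerivAt_transpose_add_smul_mulVec U D y₀
  obtain ⟨Z', hZ', hZ'_eq⟩ := exists_hasDerivAt_sylvester_solution hBV hBV (hc.vecMulVec hc).neg
    hB0 hB0 (Y := fun ε => Z (U + ε • D)) ((tendsto_add_smul_nhds_zero U D).eventually hZ)
  simp only [zero_smul, add_zero] at hZ'_eq
  exact ⟨Z', hZ', hZ'_eq⟩

theorem IsStableMat.exists_hasDerivAt_sylvester_along_line (hA : IsStableMat A)
    (hB : IsStableMat (Uᵀ * A * U)) {P : Matrix (Fin n) (Fin r) ℝ → Matrix (Fin n) (Fin r) ℝ}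
    (hP : ∀ᶠ V in 𝓝 U, A * P V + P V * (Vᵀ * A * V)ᵀ = -vecMulVec y₀ (Vᵀ *ᵥ y₀))
    (D : Matrix (Fin n) (Fin r) ℝ) :
    ∃ P', HasDerivAt (fun ε : ℝ => P (U + ε • D)) P' 0 ∧
      A * P' + P' * (Uᵀ * A * U)ᵀ + P U * (Dᵀ * A * U + Uᵀ * A * D)ᵀ
        = -vecMulVec y₀ (Dᵀ *ᵥ y₀) := by
  have hB0 : IsStableMat ((U + (0 : ℝ) • D)ᵀ * A * (U + (0 : ℝ) • D)) := by simpa using hB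
  have hBV := hasDerivAt_transpose_mul_mul_add_smul U D A
  have hc := hasDerivAt_transpose_add_smul_mulVec U D y₀
  obtain ⟨P', hP', hP'_eq⟩ := exists_hasDerivAt_sylvester_solution (hasDerivAt_const 0 A) hBV
    ((hasDerivAt_const 0 y₀).vecMulVec hc).neg hA hB0 (Y := fun ε => P (U + ε • D))
    ((tendsto_add_smul_nhds_zero U D).eventually hP)
  simp only [zero_smul, add_zero, Matrix.zero_mul, zero_add, zero_vecMulVec] at hP'_eq
  exact ⟨P', hP', hP'_eq⟩

end MatrixAnalysis

section TraceIdentities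

variable {m k R : Type*} [Fintype m] [Fintype k] [CommRing R]

theorem Matrix.trace_transpose_mul_sylvester {M : Matrix m m R} {N : Matrix k k R}
    {W E : Matrix m k R} (hW : Mᵀ * W + W * N = E) (Y : Matrix m k R) :
    (Wᵀ * (M * Y + Y * Nᵀ)).trace = (Eᵀ * Y).trace := by
  rw [← hW, transpose_add, transpose_mul, transpose_mul, transpose_transpose, Matrix.mul_add,
    Matrix.add_mul, trace_add, trace_add, Matrix.mul_assoc, ← Matrix.mul_assoc Wᵀ Y,
    trace_mul_comm (Wᵀ * Y), Matrix.mul_assoc]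

theorem Matrix.trace_eq_two_mul_of_lyapunov [DecidableEq k] {B Z_I Y K : Matrix k k R}
    (hZI : Bᵀ * Z_I + Z_I * B = -1) (hZI_symm : Z_Iᵀ = Z_I) (hY : B * Y + Y * Bᵀ = -(K + Kᵀ)) :
    Y.trace = 2 * (K * Z_I).trace := by
  have h := trace_transpose_mul_sylvester hZI Y
  rw [hY, hZI_symm, transpose_neg, transpose_one, Matrix.neg_mul, Matrix.one_mul, Matrix.mul_neg,
    trace_neg, trace_neg, Matrix.mul_add, trace_add, trace_mul_comm Z_I K,
    ← trace_transpose (Z_I * Kᵀ), transpose_mul, transpose_transpose, hZI_symm] at h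
  rw [← neg_neg Y.trace, ← h]
  ring

theorem Matrix.trace_transpose_mul_eq_of_sylvester {A : Matrix m m R} {B : Matrix k k R}
    {U P_U Y E : Matrix m k R} (hPU : Aᵀ * P_U + P_U * B = -U) (hY : A * Y + Y * Bᵀ = -E) :
    (Uᵀ * Y).trace = (P_Uᵀ * E).trace := by
  have h := trace_transpose_mul_sylvester hPU Y
  rw [hY, transpose_neg, Matrix.neg_mul, Matrix.mul_neg, trace_neg, trace_neg] at h
  exact (neg_inj.mp h).symm

theorem Matrix.trace_mul_symmetrized (A : Matrix m m R) (U D : Matrix m k R) (S : Matrix k k R) :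
    ((Dᵀ * A * U + Uᵀ * A * D) * S).trace = (Dᵀ * (A * U * S + Aᵀ * U * Sᵀ)).trace := by
  rw [Matrix.add_mul, trace_add, Matrix.mul_add, trace_add, ← trace_transpose (Uᵀ * A * D * S)]
  simp only [transpose_mul, transpose_transpose, Matrix.mul_assoc]
  rw [trace_mul_comm Sᵀ]
  simp only [Matrix.mul_assoc]

theorem Matrix.trace_gradient_identity [DecidableEq k] {A : Matrix m m R}
    {U D P P_U P' : Matrix m k R} {Z Z_I Z' : Matrix k k R} {y₀ : m → R}
    (hZ_symm : Zᵀ = Z) (hZI_symm : Z_Iᵀ = Z_I)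
    (hZI : (Uᵀ * A * U)ᵀ * Z_I + Z_I * (Uᵀ * A * U) = -1)
    (hPU : Aᵀ * P_U + P_U * (Uᵀ * A * U) = -U)
    (hZ' : Uᵀ * A * U * Z' + Z' * (Uᵀ * A * U)ᵀ
      + ((Dᵀ * A * U + Uᵀ * A * D) * Z + Z * (Dᵀ * A * U + Uᵀ * A * D)ᵀ)
      = -(vecMulVec (Dᵀ *ᵥ y₀) (Uᵀ *ᵥ y₀) + vecMulVec (Uᵀ *ᵥ y₀) (Dᵀ *ᵥ y₀)))
    (hP' : A * P' + P' * (Uᵀ * A * U)ᵀ + P * (Dᵀ * A * U + Uᵀ * A * D)ᵀ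
      = -vecMulVec y₀ (Dᵀ *ᵥ y₀)) :
    Z'.trace - 2 * ((Dᵀ * P).trace + (Uᵀ * P').trace)
      = (Dᵀ * ((-2 : R) • P
        + (2 : R) • vecMulVec y₀ (((Uᵀ *ᵥ y₀) ᵥ* Z_I) - (y₀ ᵥ* P_U))
        + (2 : R) • (A * U * (Z * Z_I - Pᵀ * P_U))
        + (2 : R) • (Aᵀ * U * (Z_I * Z - P_Uᵀ * P)))).trace := by
  set B' := Dᵀ * A * U + Uᵀ * A * D
  have hK : (B' * Z + vecMulVec (Dᵀ *ᵥ y₀) (Uᵀ *ᵥ y₀))ᵀ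
      = Z * B'ᵀ + vecMulVec (Uᵀ *ᵥ y₀) (Dᵀ *ᵥ y₀) := by
    rw [transpose_add, transpose_mul, hZ_symm, transpose_vecMulVec]
  have htrZ' : Z'.trace = 2 * ((B' * Z + vecMulVec (Dᵀ *ᵥ y₀) (Uᵀ *ᵥ y₀)) * Z_I).trace := by
    refine trace_eq_two_mul_of_lyapunov hZI hZI_symm ?_
    rw [eq_sub_of_add_eq hZ', hK]
    abel
  have htrP' : (Uᵀ * P').trace = (P_Uᵀ * (P * B'ᵀ + vecMulVec y₀ (Dᵀ *ᵥ y₀))).trace :=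
    trace_transpose_mul_eq_of_sylvester hPU (by rw [eq_sub_of_add_eq hP']; abel)
  have hPB' : (P_Uᵀ * (P * B'ᵀ)).trace = (B' * (Pᵀ * P_U)).trace := by
    rw [← trace_transpose]
    simp only [transpose_mul, transpose_transpose, Matrix.mul_assoc]
  rw [htrZ', htrP', Matrix.add_mul, Matrix.mul_add, trace_add, trace_add, hPB', Matrix.mul_assoc,
    trace_mul_symmetrized, trace_mul_symmetrized, vecMulVec_mul, trace_vecMulVec,
    mul_vecMulVec, trace_vecMulVec, transpose_mul, transpose_mul, hZ_symm, hZI_symm,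
    transpose_transpose]
  simp only [Matrix.mul_add, Matrix.mul_sub, Matrix.mul_smul, trace_add, trace_sub, trace_smul,
    smul_eq_mul, vecMulVec_sub, mul_vecMulVec, trace_vecMulVec, mulVec_transpose]
  rw [dotProduct_comm (y₀ ᵥ* P_U)]
  ring

end TraceIdentities

theorem gradient_of_functional_Phi_general {n r : ℕ}
    (A X : Matrix (Fin n) (Fin n) ℝ) (y₀ : Fin n → ℝ)
    (hA : IsStableMat A)
    (U : Matrix (Fin n) (Fin r) ℝ)
    (hB : IsStableMat (Uᵀ * A * U))
    (Zf : Matrix (Fin n) (Fin r) ℝ → Matrix (Fin r) (Fin r) ℝ)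
    (Pf : Matrix (Fin n) (Fin r) ℝ → Matrix (Fin n) (Fin r) ℝ)
    (hZf : ∀ᶠ V in nhds U,
      (Vᵀ * A * V) * Zf V + Zf V * (Vᵀ * A * V)ᵀ = -vecMulVec (Vᵀ *ᵥ y₀) (Vᵀ *ᵥ y₀))
    (hPf : ∀ᶠ V in nhds U,
      A * Pf V + Pf V * (Vᵀ * A * V)ᵀ = -vecMulVec y₀ (Vᵀ *ᵥ y₀))
    (P_U : Matrix (Fin n) (Fin r) ℝ)
    (hPU : Aᵀ * P_U + P_U * (Uᵀ * A * U) = -U)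
    (Z_I : Matrix (Fin r) (Fin r) ℝ)
    (hZI : (Uᵀ * A * U)ᵀ * Z_I + Z_I * (Uᵀ * A * U) = -1)
    (D : Matrix (Fin n) (Fin r) ℝ) :
    HasDerivAt
      (fun ε : ℝ => X.trace + (Zf (U + ε • D)).trace
        - 2 * ((U + ε • D)ᵀ * Pf (U + ε • D)).trace)
      ((Dᵀ * ((-2 : ℝ) • Pf U
        + (2 : ℝ) • vecMulVec y₀ (((Uᵀ *ᵥ y₀) ᵥ* Z_I) - (y₀ ᵥ* P_U))
        + (2 : ℝ) • (A * U * (Zf U * Z_I - (Pf U)ᵀ * P_U))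
        + (2 : ℝ) • (Aᵀ * U * (Z_I * Zf U - P_Uᵀ * Pf U)))).trace)
      0 := by
  obtain ⟨Z', hZ', hZ'_eq⟩ := hB.exists_hasDerivAt_lyapunov_along_line hZf D
  obtain ⟨P', hP', hP'_eq⟩ := hA.exists_hasDerivAt_sylvester_along_line hB hPf D
  have hZ_symm : (Zf U)ᵀ = Zf U :=
    hB.transpose_eq_of_lyapunov (by rw [transpose_neg, transpose_vecMulVec]) hZf.self_of_nhds
  have hZI_symm : Z_Iᵀ = Z_I :=
    hB.transpose.transpose_eq_of_lyapunov (by rw [transpose_neg, transpose_one])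
      (by rwa [transpose_transpose])
  have hΦ := (hZ'.matrix_trace.const_add X.trace).sub
    (((hasDerivAt_add_smul U D 0).matrix_transpose.matrix_mul_s19 hP').matrix_trace.const_mul 2)
  simp only [zero_smul, add_zero, trace_add] at hΦ
  rwa [← trace_gradient_identity hZ_symm hZI_symm hZI hPU hZ'_eq hP'_eq]

theorem gradient_of_functional_Phi {n r : ℕ}
    (A X : Matrix (Fin n) (Fin n) ℝ) (y₀ : Fin n → ℝ)
    (hA : IsStableMat A)
    (hX : A * X + X * Aᵀ = -vecMulVec y₀ y₀)
    (U : Matrix (Fin n) (Fin r) ℝ) (hU : Uᵀ * U = 1)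
    (hB : IsStableMat (Uᵀ * A * U))
    (Zf : Matrix (Fin n) (Fin r) ℝ → Matrix (Fin r) (Fin r) ℝ)
    (Pf : Matrix (Fin n) (Fin r) ℝ → Matrix (Fin n) (Fin r) ℝ)
    (hZf : ∀ᶠ V in nhds U,
      (Vᵀ * A * V) * Zf V + Zf V * (Vᵀ * A * V)ᵀ = -vecMulVec (Vᵀ *ᵥ y₀) (Vᵀ *ᵥ y₀))
    (hPf : ∀ᶠ V in nhds U,
      A * Pf V + Pf V * (Vᵀ * A * V)ᵀ = -vecMulVec y₀ (Vᵀ *ᵥ y₀))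
    (P_U : Matrix (Fin n) (Fin r) ℝ)
    (hPU : Aᵀ * P_U + P_U * (Uᵀ * A * U) = -U)
    (Z_I : Matrix (Fin r) (Fin r) ℝ)
    (hZI : (Uᵀ * A * U)ᵀ * Z_I + Z_I * (Uᵀ * A * U) = -1)
    (D : Matrix (Fin n) (Fin r) ℝ) :
    HasDerivAt
      (fun ε : ℝ => X.trace + (Zf (U + ε • D)).trace
        - 2 * ((U + ε • D)ᵀ * Pf (U + ε • D)).trace)
      ((Dᵀ * ((-2 : ℝ) • Pf U
        + (2 : ℝ) • vecMulVec y₀ (((Uᵀ *ᵥ y₀) ᵥ* Z_I) - (y₀ ᵥ* P_U))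
        + (2 : ℝ) • (A * U * (Zf U * Z_I - (Pf U)ᵀ * P_U))
        + (2 : ℝ) • (Aᵀ * U * (Z_I * Zf U - P_Uᵀ * Pf U)))).trace)
      0 :=
  gradient_of_functional_Phi_general A X y₀ hA U hB Zf Pf hZf hPf P_U hPU Z_I hZI D
end
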